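/- arXiv:2503.06243 — 7 statements merged into one kernel-verified Lean document; each statement's English description precedes it below -/
import Mathlib

section
/- If q is odd, then every k-arc in PG(2,q) satisfies k ≤ q + 1. -/
set_option maxHeartbeats 1000000
set_option synthInstance.maxHeartbeats 200000


/-- A `k`-arc in `PG(2,q)`: a set of `k ≥ 3` points (1-dimensional subspaces of `F³`),
no three of which are collinear, where three points are collinear if their
representative vectors span a subspace of dimension at most 2. -/
def IsArc (F : Type) [Field F] (K : Finset (Projectivization F (Fin 3 → F))) : Prop :=
  3 ≤ K.card ∧
    ∀ p₁ ∈ K, ∀ p₂ ∈ K, ∀ p₃ ∈ K, p₁ ≠ p₂ → p₁ ≠ p₃ → p₂ ≠ p₃ →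
      ¬ (Module.finrank F ↥(p₁.submodule ⊔ p₂.submodule ⊔ p₃.submodule) ≤ 2)

open Module
open scoped LinearAlgebra.Projectivization

section Aux

variable {F : Type} [Field F]

private lemma line_finrank {p q : ℙ F (Fin 3 → F)} (h : p ≠ q) :
    finrank F ↥(p.submodule ⊔ q.submodule) = 2 := by
  have h1 := p.finrank_submodule
  have h2 := q.finrank_submodule
  have hinf : p.submodule ⊓ q.submodule = ⊥ := by
    by_contra hb
    have hfr : finrank F ↥(p.submodule ⊓ q.submodule) ≠ 0 := by
      rw [Ne, Submodule.finrank_eq_zero]; exact hb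
    have h3 : 1 ≤ finrank F ↥(p.submodule ⊓ q.submodule) := Nat.one_le_iff_ne_zero.2 hfr
    have heq : p.submodule ⊓ q.submodule = p.submodule :=
      Submodule.eq_of_le_of_finrank_le inf_le_left (by omega)
    have h4 : p.submodule ≤ q.submodule := heq ▸ inf_le_right
    have h5 : p.submodule = q.submodule :=
      Submodule.eq_of_le_of_finrank_le h4 (by omega)
    exact h (Projectivization.submodule_injective h5)
  have hsum := Submodule.finrank_sup_add_finrank_inf_eq p.submodule q.submodule
  rw [hinf] at hsum
  simp only [finrank_bot] at hsum
  omega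

private lemma ncol {K' : Finset (ℙ F (Fin 3 → F))}
    (harc : ∀ p₁ ∈ K', ∀ p₂ ∈ K', ∀ p₃ ∈ K', p₁ ≠ p₂ → p₁ ≠ p₃ → p₂ ≠ p₃ →
      ¬ (finrank F ↥(p₁.submodule ⊔ p₂.submodule ⊔ p₃.submodule) ≤ 2))
    {p₁ p₂ p₃ : ℙ F (Fin 3 → F)} (h1 : p₁ ∈ K') (h2 : p₂ ∈ K') (h3 : p₃ ∈ K')
    (h12 : p₁ ≠ p₂) (h13 : p₁ ≠ p₃) (h23 : p₂ ≠ p₃)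
    {M : Submodule F (Fin 3 → F)} (hM : finrank F M = 2)
    (hm1 : p₁.submodule ≤ M) (hm2 : p₂.submodule ≤ M) (hm3 : p₃.submodule ≤ M) : False := by
  refine harc p₁ h1 p₂ h2 p₃ h3 h12 h13 h23 ?_
  have hle : p₁.submodule ⊔ p₂.submodule ⊔ p₃.submodule ≤ M := sup_le (sup_le hm1 hm2) hm3
  calc finrank F ↥(p₁.submodule ⊔ p₂.submodule ⊔ p₃.submodule)
      ≤ finrank F ↥M := Submodule.finrank_mono hle
    _ ≤ 2 := hM.le

/-- In a 2-dimensional space over a finite field `F` there are at most `|F| + 1`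
one-dimensional subspaces. -/
private lemma card_onedim_le [Fintype F] (Q : Type) [AddCommGroup Q] [Module F Q] [Finite Q]
    (h2 : finrank F Q = 2) :
    Nat.card {S : Submodule F Q // finrank F ↥S = 1} ≤ Fintype.card F + 1 := by
  classical
  haveI : Module.Finite F Q := Module.Finite.of_finite
  let b := Module.finBasisOfFinrankEq F Q h2
  have hne : ∀ t : F, b 0 + t • b 1 ≠ 0 := by
    intro t ht
    have := Fintype.linearIndependent_iff.mp b.linearIndependent ![1, t] ?_ 0
    · simp only [Matrix.cons_val_zero] at this
      exact one_ne_zero this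
    · rw [Fin.sum_univ_two]; simpa using ht
  let g : Option F → {S : Submodule F Q // finrank F ↥S = 1} := fun o =>
    o.elim ⟨F ∙ b 1, finrank_span_singleton (b.ne_zero 1)⟩
      (fun t => ⟨F ∙ (b 0 + t • b 1), finrank_span_singleton (hne t)⟩)
  have hsurj : Function.Surjective g := by
    rintro ⟨S, hS⟩
    obtain ⟨v, hv0, hv⟩ := finrank_eq_one_iff'.mp hS
    have hvne : (v : Q) ≠ 0 := fun h => hv0 (Subtype.ext h)
    have hSv : S = F ∙ (v : Q) := by
      apply le_antisymm
      · intro x hx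
        obtain ⟨c, hc⟩ := hv ⟨x, hx⟩
        have : c • (v : Q) = x := congrArg Subtype.val hc
        exact this ▸ Submodule.smul_mem _ c (Submodule.mem_span_singleton_self _)
      · rw [Submodule.span_singleton_le_iff_mem]; exact v.2
    set x := b.repr (v : Q) 0 with hx
    set y := b.repr (v : Q) 1 with hy
    have hrepr : (v : Q) = x • b 0 + y • b 1 := by
      have := b.sum_repr (v : Q)
      rw [Fin.sum_univ_two] at this
      exact this.symm
    by_cases hx0 : x = 0
    · refine ⟨none, ?_⟩
      have hy0 : y ≠ 0 := by
        intro hy0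
        apply hvne
        rw [hrepr, hx0, hy0, zero_smul, zero_smul, add_zero]
      apply Subtype.ext
      show (F ∙ b 1) = S
      rw [hSv, hrepr, hx0, zero_smul, zero_add,
        Submodule.span_singleton_smul_eq (isUnit_iff_ne_zero.mpr hy0)]
    · refine ⟨some (x⁻¹ * y), ?_⟩
      apply Subtype.ext
      show (F ∙ (b 0 + (x⁻¹ * y) • b 1)) = S
      rw [hSv, hrepr]
      have : b 0 + (x⁻¹ * y) • b 1 = x⁻¹ • (x • b 0 + y • b 1) := by
        rw [smul_add, smul_smul, smul_smul, inv_mul_cancel₀ hx0, one_smul]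
      rw [this, Submodule.span_singleton_smul_eq (isUnit_iff_ne_zero.mpr (inv_ne_zero hx0))]
  calc Nat.card {S : Submodule F Q // finrank F ↥S = 1}
      ≤ Nat.card (Option F) := Nat.card_le_card_of_surjective g hsurj
    _ = Fintype.card F + 1 := by simp [Nat.card_eq_fintype_card]

/-- There are at most `|F| + 1` planes (2-dimensional subspaces) of `F³` through a given
line (1-dimensional subspace). -/
private lemma card_lines_through_le [Fintype F] (A : Submodule F (Fin 3 → F))
    (hA : finrank F ↥A = 1) :
    Nat.card {W : Submodule F (Fin 3 → F) // A ≤ W ∧ finrank F ↥W = 2} ≤ Fintype.card F + 1 := by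
  classical
  set Q := (Fin 3 → F) ⧸ A with hQdef
  have hQ2 : finrank F Q = 2 := by
    have h1 := Submodule.finrank_quotient_add_finrank A
    have h3 : finrank F (Fin 3 → F) = 3 := Module.finrank_fin_fun F
    rw [hA, h3] at h1
    show finrank F ((Fin 3 → F) ⧸ A) = 2
    omega
  have hmap : ∀ (W : Submodule F (Fin 3 → F)), A ≤ W → finrank F ↥W = 2 →
      finrank F ↥(W.map A.mkQ) = 1 := by
    intro W hAW hW2
    have hrn := LinearMap.finrank_range_add_finrank_ker (A.mkQ.comp W.subtype)
    rw [LinearMap.ker_comp, Submodule.ker_mkQ, LinearMap.range_comp,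
      Submodule.range_subtype] at hrn
    have hk : finrank F ↥(Submodule.comap W.subtype A) = 1 := by
      rw [LinearEquiv.finrank_eq (Submodule.comapSubtypeEquivOfLe hAW), hA]
    rw [hk, hW2] at hrn
    omega
  have hinj : Function.Injective
      (fun W : {W : Submodule F (Fin 3 → F) // A ≤ W ∧ finrank F ↥W = 2} =>
        (⟨W.1.map A.mkQ, hmap W.1 W.2.1 W.2.2⟩ : {S : Submodule F Q // finrank F ↥S = 1})) := by
    intro W₁ W₂ h
    have h' : W₁.1.map A.mkQ = W₂.1.map A.mkQ := congrArg Subtype.val h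
    have e : ∀ W : {W : Submodule F (Fin 3 → F) // A ≤ W ∧ finrank F ↥W = 2},
        Submodule.comap A.mkQ (W.1.map A.mkQ) = W.1 := by
      intro W
      rw [Submodule.comap_map_eq, Submodule.ker_mkQ, sup_eq_left.2 W.2.1]
    apply Subtype.ext
    rw [← e W₁, ← e W₂, h']
  calc Nat.card {W : Submodule F (Fin 3 → F) // A ≤ W ∧ finrank F ↥W = 2}
      ≤ Nat.card {S : Submodule F Q // finrank F ↥S = 1} :=
        Nat.card_le_card_of_injective _ hinj
    _ ≤ Fintype.card F + 1 := card_onedim_le Q hQ2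

/-- Through any point of a `(q+2)`-arc, every plane through that point contains a
second point of the arc. -/
private lemma exists_second_point [Fintype F]
    (K' : Finset (ℙ F (Fin 3 → F)))
    (harc : ∀ p₁ ∈ K', ∀ p₂ ∈ K', ∀ p₃ ∈ K', p₁ ≠ p₂ → p₁ ≠ p₃ → p₂ ≠ p₃ →
      ¬ (finrank F ↥(p₁.submodule ⊔ p₂.submodule ⊔ p₃.submodule) ≤ 2))
    (hcard : K'.card = Fintype.card F + 2)
    {A : ℙ F (Fin 3 → F)} (hA : A ∈ K')
    {W : Submodule F (Fin 3 → F)} (hAW : A.submodule ≤ W) (hW2 : finrank F ↥W = 2) :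
    ∃ B ∈ K', B ≠ A ∧ B.submodule ≤ W := by
  classical
  by_contra hno
  push_neg at hno
  haveI : Fintype (Submodule F (Fin 3 → F)) := Fintype.ofFinite _
  set P : Submodule F (Fin 3 → F) → Prop :=
    fun W' => A.submodule ≤ W' ∧ finrank F ↥W' = 2 with hPdef
  have hWnot : W ∉ (K'.erase A).image fun B => A.submodule ⊔ B.submodule := by
    simp only [Finset.mem_image, Finset.mem_erase]
    rintro ⟨B, ⟨hBA, hBK⟩, hBW⟩
    exact hno B hBK hBA (hBW ▸ le_sup_right)
  have himgcard : ((K'.erase A).image fun B => A.submodule ⊔ B.submodule).card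
      = Fintype.card F + 1 := by
    have hinj : Set.InjOn (fun B : ℙ F (Fin 3 → F) => A.submodule ⊔ B.submodule) ↑(K'.erase A) := by
      intro B hB B' hB' hEq
      simp only [Finset.coe_erase, Set.mem_diff, Finset.mem_coe, Set.mem_singleton_iff] at hB hB'
      by_contra hne
      have hEq' : A.submodule ⊔ B.submodule = A.submodule ⊔ B'.submodule := hEq
      exact ncol harc hA hB.1 hB'.1 (Ne.symm hB.2) (Ne.symm hB'.2) hne
        (line_finrank (Ne.symm hB.2)) le_sup_left le_sup_right (le_sup_right.trans hEq'.ge)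
    rw [Finset.card_image_of_injOn hinj, Finset.card_erase_of_mem hA, hcard]
    omega
  set T : Finset (Submodule F (Fin 3 → F)) :=
    insert W ((K'.erase A).image fun B => A.submodule ⊔ B.submodule) with hTdef
  have hTcard : T.card = Fintype.card F + 2 := by
    rw [hTdef, Finset.card_insert_of_notMem hWnot, himgcard]
  have hTsub : T ⊆ Finset.univ.filter P := by
    intro x hx
    rw [hTdef, Finset.mem_insert] at hx
    rcases hx with rfl | hx
    · exact Finset.mem_filter.2 ⟨Finset.mem_univ _, hAW, hW2⟩
    · simp only [Finset.mem_image, Finset.mem_erase] at hx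
      obtain ⟨B, ⟨hBA, hBK⟩, rfl⟩ := hx
      exact Finset.mem_filter.2 ⟨Finset.mem_univ _, le_sup_left, line_finrank (Ne.symm hBA)⟩
  have hle := Finset.card_le_card hTsub
  have hfilter : (Finset.univ.filter P).card ≤ Fintype.card F + 1 := by
    rw [← Fintype.card_subtype, ← Nat.card_eq_fintype_card]
    exact card_lines_through_le A.submodule A.finrank_submodule
  omega

end Aux

/-- If `q` is odd, every `k`-arc in `PG(2,q)` satisfies `k ≤ q + 1`. -/
theorem arc_card_le_q_add_one_of_odd (q k : ℕ) (F : Type) [Field F] [Fintype F]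
    (hq : Fintype.card F = q) (hodd : Odd q)
    (K : Finset (Projectivization F (Fin 3 → F)))
    (hK : IsArc F K) (hk : K.card = k) :
    k ≤ q + 1 := by
  classical
  subst hk
  subst hq
  by_contra hgt
  push_neg at hgt
  obtain ⟨K', hK'sub, hK'card⟩ :=
    Finset.exists_subset_card_eq (show Fintype.card F + 2 ≤ K.card by omega)
  obtain ⟨-, harcK⟩ := hK
  have harc : ∀ p₁ ∈ K', ∀ p₂ ∈ K', ∀ p₃ ∈ K', p₁ ≠ p₂ → p₁ ≠ p₃ → p₂ ≠ p₃ →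
      ¬ (finrank F ↥(p₁.submodule ⊔ p₂.submodule ⊔ p₃.submodule) ≤ 2) :=
    fun p₁ h1 p₂ h2 p₃ h3 => harcK p₁ (hK'sub h1) p₂ (hK'sub h2) p₃ (hK'sub h3)
  -- choose two points A ≠ B of K'
  obtain ⟨A, hA⟩ : ∃ A, A ∈ K' := Finset.card_pos.mp (by omega)
  obtain ⟨B, hB'⟩ : (K'.erase A).Nonempty := by
    rw [← Finset.card_pos, Finset.card_erase_of_mem hA]; omega
  obtain ⟨hBA, hB⟩ := Finset.mem_erase.mp hB'
  -- construct a third point Pt on the line AB, necessarily outside the arc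
  have hab : A.rep + B.rep ≠ 0 := by
    intro h
    apply hBA
    apply Projectivization.submodule_injective
    have h1 : B.rep = (-1 : F) • A.rep := by
      rw [neg_one_smul]; exact eq_neg_of_add_eq_zero_right h
    rw [Projectivization.submodule_eq, Projectivization.submodule_eq, h1,
      Submodule.span_singleton_smul_eq (isUnit_one.neg)]
  set Pt := Projectivization.mk F (A.rep + B.rep) hab with hPtdef
  have hPtsub : Pt.submodule = F ∙ (A.rep + B.rep) := Projectivization.submodule_mk _ _
  have hmemA : A.rep ∈ A.submodule := by
    rw [Projectivization.submodule_eq]; exact Submodule.mem_span_singleton_self _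
  have hmemB : B.rep ∈ B.submodule := by
    rw [Projectivization.submodule_eq]; exact Submodule.mem_span_singleton_self _
  have hmemPt : A.rep + B.rep ∈ Pt.submodule := by
    rw [hPtsub]; exact Submodule.mem_span_singleton_self _
  have hPtle : Pt.submodule ≤ A.submodule ⊔ B.submodule := by
    rw [hPtsub, Submodule.span_singleton_le_iff_mem]
    exact Submodule.add_mem _ (Submodule.mem_sup_left hmemA) (Submodule.mem_sup_right hmemB)
  have hPtA : Pt ≠ A := by
    intro h
    apply hBA
    apply Projectivization.submodule_injective
    apply Submodule.eq_of_le_of_finrank_le _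
      (by rw [A.finrank_submodule, B.finrank_submodule])
    have h2 : B.rep ∈ A.submodule := by
      have h3 := Submodule.sub_mem _ (h ▸ hmemPt) hmemA
      rwa [add_sub_cancel_left] at h3
    rw [Projectivization.submodule_eq B, Submodule.span_singleton_le_iff_mem]
    exact h2
  have hPtB : Pt ≠ B := by
    intro h
    apply hBA
    symm
    apply Projectivization.submodule_injective
    apply Submodule.eq_of_le_of_finrank_le _
      (by rw [A.finrank_submodule, B.finrank_submodule])
    have h2 : A.rep ∈ B.submodule := by
      have h3 := Submodule.sub_mem _ (h ▸ hmemPt) hmemB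
      rwa [add_sub_cancel_right] at h3
    rw [Projectivization.submodule_eq A, Submodule.span_singleton_le_iff_mem]
    exact h2
  have hL2 : finrank F ↥(A.submodule ⊔ B.submodule) = 2 := line_finrank (Ne.symm hBA)
  have hPtK : Pt ∉ K' := by
    intro hPtK
    exact ncol harc hA hB hPtK (Ne.symm hBA) (Ne.symm hPtA) (Ne.symm hPtB) hL2
      le_sup_left le_sup_right hPtle
  have hPne : ∀ X ∈ K', Pt ≠ X := fun X hX h => hPtK (h ▸ hX)
  -- every line through Pt meets the arc in exactly 0 or 2 points
  have hfiber : ∀ M ∈ K'.image (fun X => Pt.submodule ⊔ X.submodule),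
      (K'.filter (fun X => Pt.submodule ⊔ X.submodule = M)).card = 2 := by
    intro M hM
    obtain ⟨X₀, hX₀K, hX₀M0⟩ := Finset.mem_image.mp hM
    have hX₀M : Pt.submodule ⊔ X₀.submodule = M := hX₀M0
    have hPM : Pt.submodule ≤ M := hX₀M ▸ le_sup_left
    have hX₀le : X₀.submodule ≤ M := hX₀M ▸ le_sup_right
    have hMrank : finrank F ↥M = 2 := hX₀M ▸ line_finrank (hPne X₀ hX₀K)
    obtain ⟨B', hB'K, hB'X₀, hB'M⟩ := exists_second_point K' harc hK'card hX₀K hX₀le hMrank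
    have hchar : ∀ X ∈ K', X.submodule ≤ M → Pt.submodule ⊔ X.submodule = M := by
      intro X hX hXM
      exact Submodule.eq_of_le_of_finrank_le (sup_le hPM hXM)
        ((hMrank.trans (line_finrank (hPne X hX)).symm).le)
    have hset : K'.filter (fun X => Pt.submodule ⊔ X.submodule = M) = {X₀, B'} := by
      ext X
      simp only [Finset.mem_filter, Finset.mem_insert, Finset.mem_singleton]
      constructor
      · rintro ⟨hXK, hXM⟩
        by_contra hcon
        push_neg at hcon
        have hXle : X.submodule ≤ M := hXM ▸ le_sup_right
        exact (ncol harc hX₀K hB'K hXK (Ne.symm hB'X₀) (Ne.symm hcon.1) (Ne.symm hcon.2)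
          hMrank hX₀le hB'M hXle).elim
      · rintro (rfl | rfl)
        · exact ⟨hX₀K, hX₀M⟩
        · exact ⟨hB'K, hchar _ hB'K hB'M⟩
    rw [hset, Finset.card_insert_of_notMem
      (by simp only [Finset.mem_singleton]; exact Ne.symm hB'X₀), Finset.card_singleton]
  have hsum := Finset.card_eq_sum_card_image (fun X => Pt.submodule ⊔ X.submodule) K'
  rw [Finset.sum_congr rfl hfiber, Finset.sum_const, smul_eq_mul] at hsum
  obtain ⟨m, hm⟩ := hodd
  rw [hK'card] at hsum
  omega
end

section
/- For q even, every (q+1)-arc of PG(2,q) is contained in a (q+2)-arc of PG(2,q). -/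
/-!
For `q` even, a `(q + 1)`-arc `K` has a nucleus. Counting along the `q + 1` lines through a point
shows that every point of `K` lies on exactly one tangent, and that every point off `K` lies on an
odd number of tangents, since `#K = q + 1` is odd. On a secant through two points of `K`, the
`q - 1` points off `K` meet the `q - 1` tangents at the other points of `K`, each tangent once, so
each of them lies on exactly one tangent. Hence the intersection `N` of the tangents at two points
of `K` lies on no secant, and `K ∪ {N}` is again an arc. Only the axioms of a finite projective
plane of even order are used; `PG(2, q)` is one of order `q`.
-/

open Finset

theorem Finset.card_filter_eq_zero_add_sum_of_le_one {ι : Type*} {s : Finset ι} {f : ι → ℕ}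
    (h : ∀ i ∈ s, f i ≤ 1) : #{i ∈ s | f i = 0} + ∑ i ∈ s, f i = #s := by
  rw [card_filter, ← sum_add_distrib, card_eq_sum_ones]
  refine sum_congr rfl fun i hi => ?_
  have := h i hi
  split_ifs <;> omega

namespace Configuration

variable {P : Type*} (L : Type*) [Membership P L]

open scoped Classical

def IsArc (K : Finset P) : Prop :=
  ∀ l : L, #{p ∈ K | p ∈ l} ≤ 2

noncomputable def tangents [Fintype L] (K : Finset P) : Finset L :=
  {l | #{p ∈ K | p ∈ l} = 1}

variable {L}

@[simp]
theorem mem_tangents [Fintype L] {K : Finset P} {l : L} :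
    l ∈ tangents L K ↔ #{p ∈ K | p ∈ l} = 1 := by
  simp [tangents]

theorem isArc_iff_forall_not_collinear {K : Finset P} :
    IsArc L K ↔ ∀ p₁ ∈ K, ∀ p₂ ∈ K, ∀ p₃ ∈ K, p₁ ≠ p₂ → p₁ ≠ p₃ → p₂ ≠ p₃ →
      ¬∃ l : L, p₁ ∈ l ∧ p₂ ∈ l ∧ p₃ ∈ l := by
  simp only [IsArc, ← not_lt, two_lt_card_iff, mem_filter, not_exists, not_and]
  exact ⟨fun h p₁ h₁ p₂ h₂ p₃ h₃ h12 h13 h23 l hl₁ hl₂ hl₃ =>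
      h l p₁ p₂ p₃ ⟨h₁, hl₁⟩ ⟨h₂, hl₂⟩ ⟨h₃, hl₃⟩ h12 h13 h23,
    fun h l p₁ p₂ p₃ h₁ h₂ h₃ h12 h13 h23 =>
      h p₁ h₁.1 p₂ h₂.1 p₃ h₃.1 h12 h13 h23 l h₁.2 h₂.2 h₃.2⟩

theorem IsArc.insert {K : Finset P} (hK : IsArc L K) {x : P}
    (hx : ∀ l : L, x ∈ l → #{p ∈ K | p ∈ l} ≤ 1) : IsArc L (insert x K) := by
  intro l
  rw [filter_insert]
  split_ifs with hxl
  · exact (card_insert_le _ _).trans (by simpa using hx l hxl)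
  · exact hK l

theorem card_lines_through_pair [HasLines P L] [Fintype L] {x y : P} (hxy : x ≠ y) :
    #{l : L | x ∈ l ∧ y ∈ l} = 1 := by
  obtain ⟨l, hl, hunique⟩ := HasLines.existsUnique_line P L x y hxy
  exact card_eq_one.mpr ⟨l, by ext m; simpa using ⟨hunique m, fun h => h ▸ hl⟩⟩

theorem card_points_on_pair [HasPoints P L] [Fintype P] {l m : L} (hlm : l ≠ m) :
    #{p : P | p ∈ l ∧ p ∈ m} = 1 := by
  obtain ⟨p, hp, hunique⟩ := HasPoints.existsUnique_point P L l m hlm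
  exact card_eq_one.mpr ⟨p, by ext q; simpa using ⟨hunique q, fun h => h ▸ hp⟩⟩

theorem sum_lines_through_card_filter_mem [HasLines P L] [Fintype L] {x : P} {S : Finset P}
    (hx : x ∉ S) : ∑ l ∈ {l : L | x ∈ l}, #{p ∈ S | p ∈ l} = #S := by
  have hdouble := sum_card_bipartiteAbove_eq_sum_card_bipartiteBelow (s := S)
    (t := ({l : L | x ∈ l} : Finset L)) (r := fun p l => p ∈ l)
  simp only [bipartiteAbove, bipartiteBelow, filter_filter] at hdouble
  rw [← hdouble, card_eq_sum_ones]
  refine sum_congr rfl fun p hp => ?_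
  rw [← card_lines_through_pair (L := L) (ne_of_mem_of_not_mem hp hx).symm]

theorem sum_points_on_card_filter_mem [HasPoints P L] [Fintype P] {m : L} {T : Finset L}
    (hm : m ∉ T) : ∑ p ∈ {p : P | p ∈ m}, #{l ∈ T | p ∈ l} = #T := by
  have hdouble := sum_card_bipartiteAbove_eq_sum_card_bipartiteBelow
    (s := ({p : P | p ∈ m} : Finset P)) (t := T) (r := fun p l => p ∈ l)
  simp only [bipartiteAbove, bipartiteBelow, filter_filter] at hdouble
  rw [hdouble, card_eq_sum_ones]
  refine sum_congr rfl fun l hl => ?_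
  rw [← card_points_on_pair (P := P) (ne_of_mem_of_not_mem hl hm).symm]

theorem IsArc.exists_tangent_through_of_notMem [HasLines P L] [Fintype L] {K : Finset P}
    (hK : IsArc L K) (hodd : Odd #K) {x : P} (hx : x ∉ K) :
    ∃ l ∈ tangents L K, x ∈ l := by
  by_contra! h
  have heven : Even (∑ l ∈ {l : L | x ∈ l}, #{p ∈ K | p ∈ l}) := even_sum _ fun l hl => by
    have h1 : #{p ∈ K | p ∈ l} ≠ 1 := fun h1 =>
      h l (mem_tangents.mpr h1) (mem_filter.mp hl).2
    have h2 := hK l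
    interval_cases #{p ∈ K | p ∈ l} <;> simp_all
  rw [sum_lines_through_card_filter_mem hx] at heven
  exact Nat.not_even_iff_odd.mpr hodd heven

namespace ProjectivePlane

variable [ProjectivePlane P L] [Fintype P] [Fintype L]

theorem card_lines_through (x : P) : #{l : L | x ∈ l} = order P L + 1 := by
  rw [← lineCount_eq L x, lineCount, Nat.card_eq_fintype_card, Fintype.card_subtype]

theorem card_points_on (l : L) : #{p : P | p ∈ l} = order P L + 1 := by
  rw [← pointCount_eq P l, pointCount, Nat.card_eq_fintype_card, Fintype.card_subtype]

variable {K : Finset P} (hK : IsArc L K)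
include hK

theorem card_tangents_through_of_mem (hcard : #K = order P L + 1) {e : P} (he : e ∈ K) :
    #{l ∈ tangents L K | e ∈ l} = 1 := by
  have hsucc : ∀ l : L, e ∈ l → #{p ∈ K.erase e | p ∈ l} + 1 = #{p ∈ K | p ∈ l} :=
    fun l hl => by rw [filter_erase, card_erase_add_one (mem_filter.mpr ⟨he, hl⟩)]
  have hcount := card_filter_eq_zero_add_sum_of_le_one (s := {l : L | e ∈ l})
    (f := fun l => #{p ∈ K.erase e | p ∈ l}) fun l hl => by
      have := hsucc l (mem_filter.mp hl).2
      have := hK l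
      omega
  rw [sum_lines_through_card_filter_mem (notMem_erase e K), card_erase_of_mem he, hcard,
    card_lines_through, filter_filter] at hcount
  have htangent : {l ∈ tangents L K | e ∈ l} =
      ({l | e ∈ l ∧ #{p ∈ K.erase e | p ∈ l} = 0} : Finset L) := by
    ext l
    simp only [tangents, filter_filter, mem_filter, mem_univ, true_and]
    constructor
    · rintro ⟨h1, hl⟩
      exact ⟨hl, by have := hsucc l hl; omega⟩
    · rintro ⟨hl, h0⟩
      exact ⟨by have := hsucc l hl; omega, hl⟩
  rw [htangent]
  omega

theorem card_tangents (hcard : #K = order P L + 1) : #(tangents L K) = order P L + 1 := by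
  have hdouble := sum_card_bipartiteAbove_eq_sum_card_bipartiteBelow (s := K)
    (t := tangents L K) (r := fun p l => p ∈ l)
  simp only [bipartiteAbove, bipartiteBelow] at hdouble
  rw [sum_congr rfl fun e he => card_tangents_through_of_mem hK hcard he,
    sum_congr rfl fun l hl => mem_tangents.mp hl] at hdouble
  simpa [hcard] using hdouble.symm

theorem card_tangents_through_of_mem_secant (heven : Even (order P L))
    (hcard : #K = order P L + 1) {m : L} (hm : #{p ∈ K | p ∈ m} = 2) {x : P} (hxm : x ∈ m)
    (hxK : x ∉ K) : #{l ∈ tangents L K | x ∈ l} = 1 := by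
  have hKm : ({y | y ∈ m ∧ y ∈ K} : Finset P) = {p ∈ K | p ∈ m} := by
    ext
    simp [and_comm]
  have hsum := sum_points_on_card_filter_mem (P := P) (m := m) (T := tangents L K)
    (fun h => by simp [hm] at h)
  rw [card_tangents hK hcard, ← sum_filter_add_sum_filter_not _ (· ∈ K), filter_filter,
    filter_filter, sum_congr rfl fun y hy =>
      card_tangents_through_of_mem hK hcard (mem_filter.mp hy).2.2,
    sum_const, smul_eq_mul, mul_one, hKm, hm] at hsum
  have hcardX := card_filter_add_card_filter_not (s := {y : P | y ∈ m}) (· ∈ K)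
  rw [filter_filter, filter_filter, hKm, hm, card_points_on] at hcardX
  set X : Finset P := {y | y ∈ m ∧ y ∉ K}
  have hpos : ∀ y ∈ X, 1 ≤ #{l ∈ tangents L K | y ∈ l} := fun y hy =>
    card_pos.mpr <| by
      obtain ⟨l, hl, hyl⟩ := hK.exists_tangent_through_of_notMem (hcard ▸ heven.add_one)
        (mem_filter.mp hy).2.2
      exact ⟨l, mem_filter.mpr ⟨hl, hyl⟩⟩
  have hall := (sum_eq_sum_iff_of_le hpos).mp (by rw [sum_const, smul_eq_mul, mul_one]; omega)
  exact (hall x (mem_filter.mpr ⟨mem_univ x, hxm, hxK⟩)).symm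

theorem exists_nucleus (heven : Even (order P L)) (hcard : #K = order P L + 1) :
    ∃ N ∉ K, ∀ l : L, N ∈ l → #{p ∈ K | p ∈ l} ≤ 1 := by
  have tangent_at {e : P} (he : e ∈ K) : ∃ l ∈ tangents L K, e ∈ l := by
    obtain ⟨l, hl⟩ := card_pos.mp (card_tangents_through_of_mem hK hcard he).ge
    exact ⟨l, (mem_filter.mp hl).1, (mem_filter.mp hl).2⟩
  have eq_of_mem_tangent {l : L} (hl : l ∈ tangents L K) {p q : P} (hp : p ∈ K) (hpl : p ∈ l)
      (hq : q ∈ K) (hql : q ∈ l) : p = q :=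
    card_le_one.mp (mem_tangents.mp hl).le p (mem_filter.mpr ⟨hp, hpl⟩) q
      (mem_filter.mpr ⟨hq, hql⟩)
  obtain ⟨a, ha, b, hb, hab⟩ := one_lt_card.mp (by have := one_lt_order P L; omega : 1 < #K)
  obtain ⟨ta, hta, hata⟩ := tangent_at ha
  obtain ⟨tb, htb, hbtb⟩ := tangent_at hb
  have hne : ta ≠ tb := fun h => hab (eq_of_mem_tangent hta ha hata hb (h ▸ hbtb))
  obtain ⟨hNa, hNb⟩ := HasPoints.mkPoint_ax (P := P) hne
  have hNK : HasPoints.mkPoint hne ∉ K := fun hNK => hab <|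
    (eq_of_mem_tangent hta hNK hNa ha hata).symm.trans (eq_of_mem_tangent htb hNK hNb hb hbtb)
  refine ⟨HasPoints.mkPoint hne, hNK, fun l hNl => ?_⟩
  by_contra! hl
  have hN := card_tangents_through_of_mem_secant hK heven hcard (le_antisymm (hK l) hl) hNl hNK
  exact hne (card_le_one.mp hN.le ta (mem_filter.mpr ⟨hta, hNa⟩) tb (mem_filter.mpr ⟨htb, hNb⟩))

end ProjectivePlane

end Configuration

open Matrix Projectivization
open scoped LinearAlgebra.Projectivization

namespace Projectivization

variable {F : Type*} [Field F]

theorem mem_mk_iff_submodule_le_ker {w : Fin 3 → F} (hw : w ≠ 0) (p : ℙ F (Fin 3 → F)) :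
    p ∈ mk F w hw ↔ p.submodule ≤ LinearMap.ker (dotProductEquiv F (Fin 3) w) := by
  induction p with | h v hv =>
  rw [submodule_mk, Submodule.span_singleton_le_iff_mem, LinearMap.mem_ker,
    dotProductEquiv_apply_apply, dotProduct_comm, Configuration.ofField.mem_iff, orthogonal_mk]

theorem finrank_sup_le_two_iff (p₁ p₂ p₃ : ℙ F (Fin 3 → F)) :
    Module.finrank F ↥(p₁.submodule ⊔ p₂.submodule ⊔ p₃.submodule) ≤ 2 ↔
      ∃ l : ℙ F (Fin 3 → F), p₁ ∈ l ∧ p₂ ∈ l ∧ p₃ ∈ l := by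
  constructor
  · intro h
    obtain ⟨f, hf, hle⟩ :=
      Submodule.exists_le_ker_of_lt_top (p₁.submodule ⊔ p₂.submodule ⊔ p₃.submodule)
        (Submodule.lt_top_of_finrank_lt_finrank (by rw [Module.finrank_fin_fun]; omega))
    have hw : (dotProductEquiv F (Fin 3)).symm f ≠ 0 := by simpa using hf
    refine ⟨mk F _ hw, ?_⟩
    rw [mem_mk_iff_submodule_le_ker, mem_mk_iff_submodule_le_ker, mem_mk_iff_submodule_le_ker,
      LinearEquiv.apply_symm_apply]
    simp only [sup_le_iff] at hle
    tauto
  · rintro ⟨l, h₁, h₂, h₃⟩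
    rw [← l.mk_rep, mem_mk_iff_submodule_le_ker] at h₁ h₂ h₃
    have hf : dotProductEquiv F (Fin 3) l.rep ≠ 0 := by simpa using l.rep_nonzero
    have hker := Module.Dual.finrank_ker_add_one_of_ne_zero hf
    rw [Module.finrank_fin_fun] at hker
    calc _ ≤ Module.finrank F (LinearMap.ker (dotProductEquiv F (Fin 3) l.rep)) :=
          Submodule.finrank_mono (sup_le (sup_le h₁ h₂) h₃)
      _ = 2 := by omega

theorem order_eq_card [Fintype F] [DecidableEq F] :
    Configuration.ProjectivePlane.order (ℙ F (Fin 3 → F)) (ℙ F (Fin 3 → F)) = Fintype.card F := by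
  have := Fintype.ofFinite (ℙ F (Fin 3 → F))
  have hpoints := Configuration.ProjectivePlane.card_points (ℙ F (Fin 3 → F)) (ℙ F (Fin 3 → F))
  rw [← Nat.card_eq_fintype_card, card_of_finrank F (Fin 3 → F) (Module.finrank_fin_fun F),
    sum_range_succ, sum_range_succ, sum_range_one, Nat.card_eq_fintype_card] at hpoints
  nlinarith

end Projectivization

theorem isArc_iff {F : Type} [Field F] (K : Finset (ℙ F (Fin 3 → F))) :
    IsArc F K ↔ 3 ≤ #K ∧ Configuration.IsArc (ℙ F (Fin 3 → F)) K := by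
  rw [Configuration.isArc_iff_forall_not_collinear]
  simp only [IsArc, finrank_sup_le_two_iff]

/-- For `q` even, every `(q+1)`-arc of `PG(2,q)` is contained in a `(q+2)`-arc. -/
theorem arc_extends_of_even (q : ℕ) (F : Type) [Field F] [Fintype F]
    (hq : Fintype.card F = q) (heven : Even q)
    (K : Finset (Projectivization F (Fin 3 → F)))
    (hK : IsArc F K) (hcard : K.card = q + 1) :
    ∃ K' : Finset (Projectivization F (Fin 3 → F)),
      K ⊆ K' ∧ IsArc F K' ∧ K'.card = q + 2 := by
  classical
  subst hq
  have := Fintype.ofFinite (ℙ F (Fin 3 → F))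
  rw [isArc_iff] at hK
  have horder := order_eq_card (F := F)
  obtain ⟨N, hNK, hN⟩ :=
    Configuration.ProjectivePlane.exists_nucleus hK.2 (horder ▸ heven) (horder ▸ hcard)
  refine ⟨insert N K, subset_insert N K, (isArc_iff _).mpr ⟨?_, hK.2.insert hN⟩, ?_⟩ <;>
    rw [card_insert_of_notMem hNK] <;> omega
end

section
/- Let q be a prime power and let g be an anisotropic quadratic form on F_q² (i.e., g(w) = 0 implies w = 0). Define the quadratic form Q on F_q⁴ by Q(x₀,x₁,x₂,x₃) = x₀x₁ + g(x₂,x₃). Then the projective zero set {[v] : v ∈ F_q⁴, v ≠ 0, Q(v) = 0} is a (q²+1)-cap of PG(3,q): it has exactly q² + 1 points, no three of which are collinear. -/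
/-!
Off the plane `x₀ = 0` the zeros of `Q` are the points `[1 : -g(w) : w]`, `w ∈ F²`, and on it,
by anisotropy of `g`, only `[0 : 1 : 0 : 0]`; this gives `q² + 1` points. If three distinct
zeros `[u], [v], [a u + b v]` lie on a line, then `a b ≠ 0` forces the polar form of `Q` to vanish
at `(u, v)`, so `Q` vanishes on the whole line. But a plane of `F⁴` meets both `x₀ = 0` and
`x₁ = 0`, again by anisotropy in multiples of `e₁` and `e₀`, and `Q(e₀ + e₁) = 1`.
-/

/-- No three points of the set `A ⊆ PG(3,q)` are collinear, where three points are
collinear if their representative vectors span a subspace of dimension at most 2. -/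
def NoThreeCollinear (F : Type) [Field F] (A : Set (Projectivization F (Fin 4 → F))) : Prop :=
  ∀ p₁ ∈ A, ∀ p₂ ∈ A, ∀ p₃ ∈ A, p₁ ≠ p₂ → p₁ ≠ p₃ → p₂ ≠ p₃ →
    ¬ (Module.finrank F ↥(p₁.submodule ⊔ p₂.submodule ⊔ p₃.submodule) ≤ 2)

open Module Projectivization
open scoped LinearAlgebra.Projectivization

namespace QuadraticMap

variable {R M N : Type*} [CommRing R] [AddCommGroup M] [AddCommGroup N] [Module R M] [Module R N]

theorem map_smul_add_smul (Q : QuadraticMap R M N) (a b : R) (x y : M) :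
    Q (a • x + b • y) = (a * a) • Q x + (b * b) • Q y + (a * b) • polar Q x y := by
  rw [QuadraticMap.map_add Q, QuadraticMap.map_smul, QuadraticMap.map_smul, polar_smul_left,
    polar_smul_right, smul_smul, mul_comm b]

variable {Q : QuadraticMap R M N} {x y : M}

theorem polar_eq_zero_of_map_smul_add_smul [IsDomain R] [Module.IsTorsionFree R N] {a b : R}
    (hx : Q x = 0) (hy : Q y = 0) (ha : a ≠ 0) (hb : b ≠ 0) (h : Q (a • x + b • y) = 0) :
    polar Q x y = 0 := by
  rw [map_smul_add_smul, hx, hy, smul_zero, smul_zero, zero_add, zero_add] at h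
  exact (smul_eq_zero_iff_right (mul_ne_zero ha hb)).1 h

theorem map_eq_zero_of_mem_span_pair (hx : Q x = 0) (hy : Q y = 0) (hxy : polar Q x y = 0)
    {z : M} (hz : z ∈ Submodule.span R {x, y}) : Q z = 0 := by
  obtain ⟨a, b, rfl⟩ := Submodule.mem_span_pair.1 hz
  simp [map_smul_add_smul, hx, hy, hxy]

end QuadraticMap

theorem Submodule.exists_mem_ne_zero_apply_eq_zero {K V : Type*} [Field K] [AddCommGroup V]
    [Module K V] (W : Submodule K V) (hW : 1 < finrank K W) (f : V →ₗ[K] K) :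
    ∃ x ∈ W, x ≠ 0 ∧ f x = 0 := by
  have : FiniteDimensional K W := Module.finite_of_finrank_pos (by omega)
  obtain ⟨⟨x, hxW⟩, hx, hfx⟩ := Submodule.exists_mem_ne_zero_of_ne_bot
    (LinearMap.ker_ne_bot_of_finrank_lt (f := f.domRestrict W) (by simpa using hW))
  exact ⟨x, hxW, by simpa using hfx, by simpa using hx⟩

namespace Projectivization

variable {K V : Type*} [Field K] [AddCommGroup V] [Module K V]

theorem finrank_span_pair_of_mk_ne {u v : V} (hu : u ≠ 0) (hv : v ≠ 0)
    (huv : mk K u hu ≠ mk K v hv) : finrank K (Submodule.span K {u, v}) = 2 := by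
  rw [← independent_pair_iff_ne, independent_mk_iff_LinearIndependent] at huv
  rw [← Matrix.range_cons_cons_empty u v ![], finrank_span_eq_card huv, Fintype.card_fin]

theorem exists_smul_add_smul_eq_of_finrank_sup_le_two {u v w : V} (hu : u ≠ 0) (hv : v ≠ 0)
    (hw : w ≠ 0) (huv : mk K u hu ≠ mk K v hv) (huw : mk K u hu ≠ mk K w hw)
    (hvw : mk K v hv ≠ mk K w hw)
    (h : finrank K ↥((mk K u hu).submodule ⊔ (mk K v hv).submodule ⊔ (mk K w hw).submodule)
      ≤ 2) :
    ∃ a b : K, a ≠ 0 ∧ b ≠ 0 ∧ a • u + b • v = w := by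
  simp only [submodule_mk] at h
  have hle : Submodule.span K {u, v} ≤ K ∙ u ⊔ K ∙ v ⊔ K ∙ w := by
    rw [Submodule.span_insert]; exact le_sup_left
  have heq := Submodule.eq_of_le_of_finrank_le hle (finrank_span_pair_of_mk_ne hu hv huv ▸ h)
  have hwmem : w ∈ Submodule.span K {u, v} :=
    heq ▸ Submodule.mem_sup_right (Submodule.mem_span_singleton_self w)
  obtain ⟨a, b, hab⟩ := Submodule.mem_span_pair.1 hwmem
  refine ⟨a, b, ?_, ?_, hab⟩
  · rintro rfl
    exact hvw ((mk_eq_mk_iff' K w v hw hv).2 ⟨b, by simpa using hab⟩).symm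
  · rintro rfl
    exact huw ((mk_eq_mk_iff' K w u hw hu).2 ⟨a, by simpa using hab⟩).symm

end Projectivization

def QuadraticForm.zeroLocus {K V : Type*} [Field K] [AddCommGroup V] [Module K V]
    (Q : QuadraticForm K V) : Set (ℙ K V) :=
  {p | ∃ (v : V) (hv : v ≠ 0), p = mk K v hv ∧ Q v = 0}

theorem QuadraticForm.noThreeCollinear_zeroLocus {F : Type} [Field F]
    (Q : QuadraticForm F (Fin 4 → F))
    (hQ : ∀ W : Submodule F (Fin 4 → F), finrank F W = 2 → ∃ x ∈ W, Q x ≠ 0) :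
    NoThreeCollinear F Q.zeroLocus := by
  rintro _ ⟨u, hu, rfl, hQu⟩ _ ⟨v, hv, rfl, hQv⟩ _ ⟨w, hw, rfl, hQw⟩ huv huw hvw hcol
  obtain ⟨a, b, ha, hb, rfl⟩ :=
    exists_smul_add_smul_eq_of_finrank_sup_le_two hu hv hw huv huw hvw hcol
  have hpolar := QuadraticMap.polar_eq_zero_of_map_smul_add_smul hQu hQv ha hb hQw
  obtain ⟨x, hx, hQx⟩ := hQ _ (finrank_span_pair_of_mk_ne hu hv huv)
  exact hQx (QuadraticMap.map_eq_zero_of_mem_span_pair hQu hQv hpolar hx)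

section EllipticForm

variable {F : Type*} [Field F] (g : QuadraticForm F (Fin 2 → F))

def ellipticForm : QuadraticForm F (Fin 4 → F) :=
  QuadraticMap.linMulLin (LinearMap.proj 0) (LinearMap.proj 1) +
    g.comp (LinearMap.funLeft F F ![2, 3])

theorem ellipticForm_apply (v : Fin 4 → F) : ellipticForm g v = v 0 * v 1 + g ![v 2, v 3] := by
  simp only [ellipticForm, add_apply, QuadraticMap.linMulLin_apply,
    QuadraticMap.comp_apply, LinearMap.proj_apply]
  congr 2
  funext i
  fin_cases i <;> rfl

variable {g}

theorem ellipticForm_apply_of_tail_eq_zero {v : Fin 4 → F} (h2 : v 2 = 0) (h3 : v 3 = 0) :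
    ellipticForm g v = v 0 * v 1 := by
  rw [ellipticForm_apply, h2, h3, show (![0, 0] : Fin 2 → F) = 0 by simp, map_zero, add_zero]

theorem ellipticForm_eq_zero_iff (hg : g.Anisotropic) {v : Fin 4 → F} (h : v 0 * v 1 = 0) :
    ellipticForm g v = 0 ↔ v 2 = 0 ∧ v 3 = 0 := by
  constructor
  · intro hv
    rw [ellipticForm_apply, h, zero_add] at hv
    have := hg _ hv
    exact ⟨congrFun this 0, congrFun this 1⟩
  · rintro ⟨h2, h3⟩
    rw [ellipticForm_apply_of_tail_eq_zero h2 h3, h]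

theorem ellipticForm_exists_ne_zero (hg : g.Anisotropic) (W : Submodule F (Fin 4 → F))
    (hW : finrank F W = 2) : ∃ x ∈ W, ellipticForm g x ≠ 0 := by
  by_contra! hzero
  obtain ⟨x, hxW, hx, hx0⟩ := W.exists_mem_ne_zero_apply_eq_zero (by omega) (LinearMap.proj 0)
  obtain ⟨y, hyW, hy, hy1⟩ := W.exists_mem_ne_zero_apply_eq_zero (by omega) (LinearMap.proj 1)
  simp only [LinearMap.coe_proj, Function.eval] at hx0 hy1
  obtain ⟨hx2, hx3⟩ := (ellipticForm_eq_zero_iff hg (by simp [hx0])).1 (hzero x hxW)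
  obtain ⟨hy2, hy3⟩ := (ellipticForm_eq_zero_iff hg (by simp [hy1])).1 (hzero y hyW)
  have hx1 : x 1 ≠ 0 := fun hx1 => hx (by funext i; fin_cases i <;> assumption)
  have hy0 : y 0 ≠ 0 := fun hy0 => hy (by funext i; fin_cases i <;> assumption)
  apply mul_ne_zero hy0 hx1
  have hsum := hzero (x + y) (W.add_mem hxW hyW)
  rw [ellipticForm_apply_of_tail_eq_zero (by simp [hx2, hy2]) (by simp [hx3, hy3])] at hsum
  simpa [hx0, hy1] using hsum

end EllipticForm

section EllipticPoint

variable {F : Type*} [Field F] (g : QuadraticForm F (Fin 2 → F))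

def ellipticPoint : Option (Fin 2 → F) → ℙ F (Fin 4 → F)
  | none => mk F ![0, 1, 0, 0] (by simp)
  | some w => mk F ![1, -g w, w 0, w 1] (by simp)

variable {g}

theorem ellipticPoint_injective : Function.Injective (ellipticPoint g) := by
  rintro (_ | w) (_ | w') h <;> obtain ⟨a, ha⟩ := (mk_eq_mk_iff _ _ _ _ _).1 h
  · rfl
  iterate 2 · simpa [Units.smul_def] using congrFun ha 0
  · have ha1 : (a : F) = 1 := by simpa [Units.smul_def] using congrFun ha 0
    have h2 := congrFun ha 2
    have h3 := congrFun ha 3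
    simp only [Units.smul_def, ha1, one_smul] at h2 h3
    congr 1
    funext i
    fin_cases i
    · exact h2.symm
    · exact h3.symm

theorem range_ellipticPoint (hg : g.Anisotropic) :
    Set.range (ellipticPoint g) = (ellipticForm g).zeroLocus := by
  ext p
  constructor
  · rintro ⟨_ | w, rfl⟩
    · exact ⟨_, _, rfl, (ellipticForm_apply_of_tail_eq_zero rfl rfl).trans (by simp)⟩
    · refine ⟨_, _, rfl, ?_⟩
      have hw : ![w 0, w 1] = w := by funext i; fin_cases i <;> rfl
      simp [ellipticForm_apply, hw]
  rintro ⟨v, hv, rfl, hQv⟩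
  by_cases h0 : v 0 = 0
  · obtain ⟨h2, h3⟩ := (ellipticForm_eq_zero_iff hg (by simp [h0])).1 hQv
    refine ⟨none, ((mk_eq_mk_iff' _ _ _ _ _).2 ⟨v 1, ?_⟩).symm⟩
    funext i
    fin_cases i <;> simp [h0, h2, h3]
  · set w : Fin 2 → F := (v 0)⁻¹ • ![v 2, v 3]
    have hgw : g w = -((v 0)⁻¹ * v 1) := by
      rw [ellipticForm_apply] at hQv
      rw [QuadraticMap.map_smul, smul_eq_mul, eq_neg_of_add_eq_zero_right hQv]
      field_simp
    have hw0 : w 0 = (v 0)⁻¹ * v 2 := by simp [w]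
    have hw1 : w 1 = (v 0)⁻¹ * v 3 := by simp [w]
    refine ⟨some w, ((mk_eq_mk_iff' _ _ _ _ _).2 ⟨v 0, ?_⟩).symm⟩
    funext i
    fin_cases i <;> simp [hgw, hw0, hw1, h0]

theorem ncard_zeroLocus_ellipticForm [Fintype F] (hg : g.Anisotropic) :
    (ellipticForm g).zeroLocus.ncard = Fintype.card F ^ 2 + 1 := by
  rw [← range_ellipticPoint hg, ← Nat.card_coe_set_eq,
    Nat.card_range_of_injective ellipticPoint_injective]
  simp [Nat.card_eq_fintype_card]

end EllipticPoint

/-- Let `g` be an anisotropic quadratic form on `F_q²` and let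
`Q(x₀,x₁,x₂,x₃) = x₀x₁ + g(x₂,x₃)`.  Then the projective zero set of `Q` is a
`(q²+1)`-cap of `PG(3,q)`: it has exactly `q² + 1` points, no three collinear. -/
theorem elliptic_quadric_is_cap (q : ℕ) (F : Type) [Field F] [Fintype F]
    (hq : Fintype.card F = q)
    (g : QuadraticForm F (Fin 2 → F)) (hg : ∀ w, g w = 0 → w = 0)
    (S : Set (Projectivization F (Fin 4 → F)))
    (hS : S = {p | ∃ (v : Fin 4 → F) (hv : v ≠ 0),
      p = Projectivization.mk F v hv ∧ v 0 * v 1 + g ![v 2, v 3] = 0}) :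
    S.ncard = q ^ 2 + 1 ∧ NoThreeCollinear F S := by
  have hS' : S = (ellipticForm g).zeroLocus := by
    simp only [hS, QuadraticForm.zeroLocus, ellipticForm_apply]
  subst hS' hq
  exact ⟨ncard_zeroLocus_ellipticForm hg,
    QuadraticForm.noThreeCollinear_zeroLocus _ (ellipticForm_exists_ne_zero hg)⟩
end

section
/- (Tits) Let e ≥ 1, q = 2^{2e+1}, and let σ : F_q → F_q be the field automorphism σ(t) = t^{2^{e+1}}. Then the set O = {[(1, xy + σ(x)·x² + σ(y), y, x)] : x, y ∈ F_q} ∪ {[(0,1,0,0)]} is an ovoid of PG(3,q): it consists of exactly q² + 1 points, no three of which are collinear. Moreover, O is not an elliptic quadric: there is no quadratic form Q on F_q⁴ with O = {[v] : v ≠ 0, Q(v) = 0}. -/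
open Projectivization Module Polynomial
open scoped LinearAlgebra.Projectivization

namespace Projectivization

variable {K V : Type*} [DivisionRing K] [AddCommGroup V] [Module K V]

lemma submodule_lt_sup_of_ne {p₁ p₂ : ℙ K V} (h : p₁ ≠ p₂) :
    p₁.submodule < p₁.submodule ⊔ p₂.submodule := by
  refine lt_of_le_of_ne le_sup_left fun heq => h ?_
  have hle : p₂.submodule ≤ p₁.submodule := heq ▸ le_sup_right
  have : FiniteDimensional K p₁.submodule := .of_finrank_eq_succ p₁.finrank_submodule
  exact submodule_injective (Submodule.eq_of_le_of_finrank_eq hle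
    (by rw [finrank_submodule, finrank_submodule])).symm

lemma submodule_le_sup_of_finrank_le_two [FiniteDimensional K V] {p₁ p₂ p₃ : ℙ K V}
    (h₁₂ : p₁ ≠ p₂) (h : finrank K ↥(p₁.submodule ⊔ p₂.submodule ⊔ p₃.submodule) ≤ 2) :
    p₃.submodule ≤ p₁.submodule ⊔ p₂.submodule := by
  have h₂ : 2 ≤ finrank K ↥(p₁.submodule ⊔ p₂.submodule) := by
    have := Submodule.finrank_lt_finrank_of_lt (submodule_lt_sup_of_ne h₁₂)
    rwa [finrank_submodule] at this
  rw [Submodule.eq_of_le_of_finrank_le le_sup_left (h.trans h₂)]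
  exact le_sup_right

lemma submodule_mk_le_sup_iff {u v w : V} (hu : u ≠ 0) (hv : v ≠ 0) (hw : w ≠ 0) :
    (mk K w hw).submodule ≤ (mk K u hu).submodule ⊔ (mk K v hv).submodule ↔
      ∃ a b : K, a • u + b • v = w := by
  simp [submodule_mk, Submodule.mem_sup, Submodule.mem_span_singleton]

end Projectivization

lemma Projectivization.mk_mem_quadric_iff {K V : Type*} [Field K] [AddCommGroup V] [Module K V]
    (Q : QuadraticForm K V) {v : V} (hv : v ≠ 0) :
    mk K v hv ∈ {p | ∃ (w : V) (hw : w ≠ 0), p = mk K w hw ∧ Q w = 0} ↔ Q v = 0 := by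
  refine ⟨?_, fun h => ⟨v, hv, rfl, h⟩⟩
  rintro ⟨w, hw, hvw, hQ⟩
  obtain ⟨a, rfl⟩ := (mk_eq_mk_iff' K _ w hv hw).1 hvw
  rw [QuadraticMap.map_smul, hQ, smul_zero]

lemma noThreeCollinear_insert {F : Type} [Field F] {A : Set (ℙ F (Fin 4 → F))}
    {p : ℙ F (Fin 4 → F)}
    (hA : ∀ a ∈ A, ∀ b ∈ A, ∀ r ∈ A, a ≠ b → r ≠ a → r ≠ b →
      ¬ r.submodule ≤ a.submodule ⊔ b.submodule)
    (hp : ∀ a ∈ A, ∀ b ∈ A, a ≠ b → ¬ p.submodule ≤ a.submodule ⊔ b.submodule) :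
    NoThreeCollinear F (insert p A) := by
  intro p₁ h₁ p₂ h₂ p₃ h₃ h₁₂ h₁₃ h₂₃ hrank
  have le₁ := submodule_le_sup_of_finrank_le_two h₂₃ (p₃ := p₁) (by rwa [sup_comm, ← sup_assoc])
  have le₂ := submodule_le_sup_of_finrank_le_two h₁₃ (p₃ := p₂) (by rwa [sup_right_comm])
  have le₃ := submodule_le_sup_of_finrank_le_two h₁₂ hrank
  rcases h₁ with rfl | h₁
  · exact hp p₂ (h₂.resolve_left h₁₂.symm) p₃ (h₃.resolve_left h₁₃.symm) h₂₃ le₁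
  rcases h₂ with rfl | h₂
  · exact hp p₁ h₁ p₃ (h₃.resolve_left h₂₃.symm) h₁₃ le₂
  rcases h₃ with rfl | h₃
  · exact hp p₁ h₁ p₂ h₂ h₁₂ le₃
  · exact hA p₁ h₁ p₂ h₂ p₃ h₃ h₁₂ h₁₃.symm h₂₃.symm le₃

lemma QuadraticMap.map_add_smul_add_smul {R M N : Type*} [CommRing R] [AddCommGroup M]
    [Module R M] [AddCommGroup N] [Module R N] (Q : QuadraticMap R M N) (u v w : M) (s t : R) :
    Q (u + s • v + t • w) = Q u + (s * s) • Q v + (t * t) • Q w + s • polar Q u v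
      + t • polar Q u w + (s * t) • polar Q v w := by
  rw [QuadraticMap.map_add Q (u + s • v) (t • w), QuadraticMap.map_add Q u (s • v),
    QuadraticMap.map_smul, QuadraticMap.map_smul, polar_add_left]
  simp only [polar_smul_left, polar_smul_right, smul_smul, mul_comm t s]
  abel

lemma coeff_sq_eq_zero_of_forall_eq_zero {F : Type*} [Field F] [Fintype F] {k : ℕ} (hk : 3 ≤ k)
    (hkF : k + 1 < Fintype.card F) {a b c d e : F}
    (h : ∀ t : F, a + b * t + c * t ^ 2 + d * t ^ k + e * t ^ (k + 1) = 0) : c = 0 := by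
  set P : F[X] := C a + C b * X + C c * X ^ 2 + C d * X ^ k + C e * X ^ (k + 1) with hP
  have hdeg : P.natDegree ≤ k + 1 := by
    rw [hP]
    compute_degree
    all_goals omega
  have hP₀ : P = 0 := eq_zero_of_natDegree_lt_card_of_eval_eq_zero P Function.injective_id
    (fun t => by simpa [P] using h t) (by simpa using hdeg.trans_lt hkF)
  simpa [P, coeff_X_pow, coeff_X, show 2 ≠ k by omega, show 2 ≠ k + 1 by omega] using
    congrArg (coeff · 2) hP₀

namespace Tits

variable {F : Type} [Field F]

def form (σ : F → F) (x y : F) : F := x * y + σ x * x ^ 2 + σ y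

lemma map_form {σ : F →+* F} (hσ : ∀ t, σ (σ t) = t ^ 2) (x y : F) :
    σ (form σ x y) = σ x * σ y + x ^ 2 * σ x ^ 2 + y ^ 2 := by
  simp only [form, map_add, map_mul, map_pow, hσ]

section CharTwo

variable [CharP F 2] {σ : F →+* F} (hσ : ∀ t, σ (σ t) = t ^ 2)
include hσ

lemma form_translate (a b x y : F) :
    form σ (a + x) (b + y + x * σ a) = form σ a b + form σ x y + a * y + (b + a * σ a) * x := by
  simp only [form, map_add, map_mul, hσ]
  linear_combination
    (a ^ 2 * σ x + x * a * σ a + x * a * σ x + x ^ 2 * σ a) * CharTwo.two_eq_zero (R := F)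

lemma form_eq_zero_iff {x y : F} : form σ x y = 0 ↔ x = 0 ∧ y = 0 := by
  refine ⟨fun hf => ?_, fun ⟨hx, hy⟩ => by simp [form, hx, hy]⟩
  have hσf : σ x * σ y + x ^ 2 * σ x ^ 2 + y ^ 2 = 0 := by rw [← map_form hσ, hf, map_zero]
  rw [form] at hf
  have hy : y * (σ x * x + y) = 0 := by
    linear_combination
      σ x * hf + hσf - (x ^ 2 * σ x ^ 2 + σ x * σ y) * CharTwo.two_eq_zero (R := F)
  rcases mul_eq_zero.1 hy with rfl | hy
  · simpa using hf
  · obtain rfl : y = σ x * x := by linear_combination hy - σ x * x * CharTwo.two_eq_zero (R := F)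
    rw [map_mul, hσ] at hf
    have : x ^ 2 * σ x = 0 := by linear_combination hf - x ^ 2 * σ x * CharTwo.two_eq_zero (R := F)
    obtain rfl : x = 0 := by simpa using this
    simp

lemma form_mul_map_form (x y : F) :
    form σ x y * σ (form σ x y)
      = x * y * σ (form σ x y) + σ y * y ^ 2 + σ x * form σ x y ^ 2 := by
  rw [map_form hσ, form]
  linear_combination -(x * y * σ x * σ y + x ^ 3 * y * σ x ^ 2) * CharTwo.two_eq_zero (R := F)

lemma eq_one_of_form_mul_eq_mul_form {x y t : F} (hxy : ¬ (x = 0 ∧ y = 0)) (ht : t ≠ 0)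
    (h : form σ (t * x) (t * y) = t * form σ x y) : t = 1 := by
  have hf : form σ x y ≠ 0 := mt (form_eq_zero_iff hσ).1 hxy
  have hσf : σ (form σ x y) ≠ 0 := (map_ne_zero σ).2 hf
  have hσt : σ t ≠ 0 := (map_ne_zero σ).2 ht
  have J := form_mul_map_form hσ x y
  have Jt := form_mul_map_form hσ (t * x) (t * y)
  rw [h, map_mul, map_mul, map_mul] at Jt
  have key : (t - 1) * (σ t * t * σ (form σ x y) * form σ x y) = 0 := by
    linear_combination σ t * t ^ 2 * J - Jt
  have := mul_ne_zero (mul_ne_zero (mul_ne_zero hσt ht) hσf) hf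
  exact sub_eq_zero.1 ((mul_eq_zero.1 key).resolve_right this)

lemma eq_zero_or_eq_one_of_form_interpolate {x₁ y₁ x₂ y₂ t : F} (h : (x₁, y₁) ≠ (x₂, y₂))
    (hf : form σ (x₁ + t * (x₂ - x₁)) (y₁ + t * (y₂ - y₁))
      = form σ x₁ y₁ + t * (form σ x₂ y₂ - form σ x₁ y₁)) :
    t = 0 ∨ t = 1 := by
  obtain ⟨X, rfl⟩ : ∃ X, x₂ = x₁ + X := ⟨x₂ - x₁, by ring⟩
  obtain ⟨Y, rfl⟩ : ∃ Y, y₂ = y₁ + Y + X * σ x₁ := ⟨y₂ - y₁ - X * σ x₁, by ring⟩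
  rw [show x₁ + t * (x₁ + X - x₁) = x₁ + t * X by ring,
    show y₁ + t * (y₁ + Y + X * σ x₁ - y₁) = y₁ + t * Y + t * X * σ x₁ by ring,
    form_translate hσ, form_translate hσ] at hf
  refine or_iff_not_imp_left.2 fun ht =>
    eq_one_of_form_mul_eq_mul_form hσ (x := X) (y := Y) ?_ ht (by linear_combination hf)
  rintro ⟨rfl, rfl⟩
  exact h (by simp)

end CharTwo

def point (σ : F → F) (x y : F) : ℙ F (Fin 4 → F) := mk F ![1, form σ x y, y, x] (by simp)

def pointAtInfinity : ℙ F (Fin 4 → F) := mk F ![0, 1, 0, 0] (by simp)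

def ovoid (σ : F → F) : Set (ℙ F (Fin 4 → F)) :=
  insert pointAtInfinity (Set.range fun z : F × F => point σ z.1 z.2)

lemma point_eq_point_iff {σ : F → F} {x y x' y' : F} :
    point σ x y = point σ x' y' ↔ x = x' ∧ y = y' := by
  refine ⟨fun h => ?_, by rintro ⟨rfl, rfl⟩; rfl⟩
  simp only [point, mk_eq_mk_iff', Matrix.smul_cons, smul_eq_mul, mul_one, Matrix.smul_empty,
    Matrix.vecCons_inj, exists_eq_left, one_mul, and_true] at h
  exact ⟨h.2.2.symm, h.2.1.symm⟩

lemma pointAtInfinity_ne_point (σ : F → F) (x y : F) : pointAtInfinity ≠ point σ x y := by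
  simp [point, pointAtInfinity, mk_eq_mk_iff', funext_iff, Fin.forall_fin_succ]

lemma ncard_ovoid [Fintype F] (σ : F → F) : (ovoid σ).ncard = Fintype.card F ^ 2 + 1 := by
  rw [ovoid, Set.ncard_insert_of_notMem, Set.ncard_range_of_injective]
  · simp [sq]
  · rintro ⟨x, y⟩ ⟨x', y'⟩ h
    simpa using point_eq_point_iff.1 h
  · rintro ⟨z, hz⟩
    exact pointAtInfinity_ne_point σ z.1 z.2 hz.symm

lemma pointAtInfinity_not_le_sup {σ : F → F} {x₁ y₁ x₂ y₂ : F}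
    (h : point σ x₁ y₁ ≠ point σ x₂ y₂) :
    ¬ pointAtInfinity.submodule ≤ (point σ x₁ y₁).submodule ⊔ (point σ x₂ y₂).submodule := by
  rw [pointAtInfinity, point, point, submodule_mk_le_sup_iff]
  rintro ⟨a, b, hab⟩
  simp only [Matrix.smul_cons, Matrix.add_cons, smul_eq_mul, Matrix.smul_empty,
    Matrix.empty_add_empty, Matrix.head_cons, Matrix.tail_cons, Matrix.vecCons_inj, mul_one,
    and_true] at hab
  obtain ⟨hb, hf, hy, hx⟩ := hab
  obtain rfl : b = -a := by linear_combination hb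
  have ha : a ≠ 0 := by rintro rfl; simp at hf
  exact h (point_eq_point_iff.2
    ⟨mul_left_cancel₀ ha (by linear_combination hx), mul_left_cancel₀ ha (by linear_combination hy)⟩)

lemma point_not_le_sup [CharP F 2] {σ : F →+* F} (hσ : ∀ t, σ (σ t) = t ^ 2)
    {x₁ y₁ x₂ y₂ x₃ y₃ : F} (h₁₂ : point σ x₁ y₁ ≠ point σ x₂ y₂)
    (h₃₁ : point σ x₃ y₃ ≠ point σ x₁ y₁) (h₃₂ : point σ x₃ y₃ ≠ point σ x₂ y₂) :
    ¬ (point σ x₃ y₃).submodule ≤ (point σ x₁ y₁).submodule ⊔ (point σ x₂ y₂).submodule := by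
  rw [point, point, point, submodule_mk_le_sup_iff]
  rintro ⟨a, b, hab⟩
  simp only [Matrix.smul_cons, Matrix.add_cons, smul_eq_mul, Matrix.smul_empty,
    Matrix.empty_add_empty, Matrix.head_cons, Matrix.tail_cons, Matrix.vecCons_inj, mul_one,
    and_true] at hab
  obtain ⟨ha, hf, hy, hx⟩ := hab
  obtain rfl : a = 1 - b := by linear_combination ha
  have h : (x₁, y₁) ≠ (x₂, y₂) := fun h => h₁₂ (point_eq_point_iff.2 (Prod.ext_iff.1 h))
  rcases eq_zero_or_eq_one_of_form_interpolate hσ (t := b) h (by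
      rw [show x₁ + b * (x₂ - x₁) = x₃ by linear_combination hx,
        show y₁ + b * (y₂ - y₁) = y₃ by linear_combination hy]
      linear_combination -hf) with rfl | rfl
  · exact h₃₁ (point_eq_point_iff.2 ⟨by linear_combination -hx, by linear_combination -hy⟩)
  · exact h₃₂ (point_eq_point_iff.2 ⟨by linear_combination -hx, by linear_combination -hy⟩)

lemma noThreeCollinear_ovoid [CharP F 2] {σ : F →+* F} (hσ : ∀ t, σ (σ t) = t ^ 2) :
    NoThreeCollinear F (ovoid σ) := by
  refine noThreeCollinear_insert ?_ ?_
  · rintro _ ⟨⟨x₁, y₁⟩, rfl⟩ _ ⟨⟨x₂, y₂⟩, rfl⟩ _ ⟨⟨x₃, y₃⟩, rfl⟩ h₁₂ h₃₁ h₃₂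
    exact point_not_le_sup hσ h₁₂ h₃₁ h₃₂
  · rintro _ ⟨⟨x₁, y₁⟩, rfl⟩ _ ⟨⟨x₂, y₂⟩, rfl⟩ h₁₂
    exact pointAtInfinity_not_le_sup h₁₂

lemma ovoid_ne_quadric [Fintype F] {σ : F → F} {k : ℕ} (hσ : ∀ t, σ t = t ^ k) (hk : 3 ≤ k)
    (hkF : k + 1 < Fintype.card F) (Q : QuadraticForm F (Fin 4 → F)) :
    ovoid σ ≠ {p | ∃ (v : Fin 4 → F) (hv : v ≠ 0), p = mk F v hv ∧ Q v = 0} := by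
  intro hQ
  have hQO {v : Fin 4 → F} (hv : v ≠ 0) (h : mk F v hv ∈ ovoid σ) : Q v = 0 :=
    (mk_mem_quadric_iff Q hv).1 (hQ ▸ h)
  have hinf : Q ![0, 1, 0, 0] = 0 := hQO _ (Set.mem_insert _ _)
  have hcurve (t : F) : Q ![1, 0, 0, 0] + QuadraticMap.polar Q ![1, 0, 0, 0] ![0, 0, 1, 0] * t
      + Q ![0, 0, 1, 0] * t ^ 2 + QuadraticMap.polar Q ![1, 0, 0, 0] ![0, 1, 0, 0] * t ^ k
      + QuadraticMap.polar Q ![0, 1, 0, 0] ![0, 0, 1, 0] * t ^ (k + 1) = 0 := by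
    have h := hQO _ (Set.mem_insert_of_mem _ ⟨(0, t), rfl⟩)
    rw [show (![1, form σ 0 t, t, 0] : Fin 4 → F)
        = ![1, 0, 0, 0] + t ^ k • ![0, 1, 0, 0] + t • ![0, 0, 1, 0] by
      ext i; fin_cases i <;> simp [form, hσ], QuadraticMap.map_add_smul_add_smul, hinf] at h
    simp only [smul_eq_mul] at h
    linear_combination h
  have hQe₂ : Q ![0, 0, 1, 0] = 0 := coeff_sq_eq_zero_of_forall_eq_zero hk hkF hcurve
  have := hQ ▸ (mk_mem_quadric_iff Q (by simp)).2 hQe₂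
  simp [ovoid, pointAtInfinity, point, mk_eq_mk_iff', funext_iff, Fin.forall_fin_succ] at this

end Tits

/-- Tits: for `q = 2^{2e+1}` (`e ≥ 1`) and `σ : t ↦ t^{2^{e+1}}`, the set
`O = {[(1, xy + σ(x)x² + σ(y), y, x)] : x, y ∈ F_q} ∪ {[(0,1,0,0)]}` is an ovoid of
`PG(3,q)` — it has exactly `q² + 1` points, no three collinear — and `O` is not an
elliptic quadric: it is not the projective zero set of any quadratic form on `F⁴`. -/
theorem tits_ovoid (e : ℕ) (he : 1 ≤ e) (q : ℕ) (hq2 : q = 2 ^ (2 * e + 1))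
    (F : Type) [Field F] [Fintype F] (hq : Fintype.card F = q)
    (σ : F → F) (hσ : ∀ t, σ t = t ^ 2 ^ (e + 1))
    (O : Set (Projectivization F (Fin 4 → F)))
    (hO : O = {p | ∃ (x y : F)
          (hv : (![1, x * y + σ x * x ^ 2 + σ y, y, x] : Fin 4 → F) ≠ 0),
          p = Projectivization.mk F ![1, x * y + σ x * x ^ 2 + σ y, y, x] hv} ∪
        {p | ∃ hv : (![0, 1, 0, 0] : Fin 4 → F) ≠ 0,
          p = Projectivization.mk F ![0, 1, 0, 0] hv}) :
    O.ncard = q ^ 2 + 1 ∧ NoThreeCollinear F O ∧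
      ¬ ∃ Q : QuadraticForm F (Fin 4 → F),
          O = {p | ∃ (v : Fin 4 → F) (hv : v ≠ 0),
            p = Projectivization.mk F v hv ∧ Q v = 0} := by
  obtain rfl : O = Tits.ovoid σ := by
    subst hO
    ext p
    constructor
    · rintro (⟨x, y, -, rfl⟩ | ⟨-, rfl⟩)
      exacts [Or.inr ⟨(x, y), rfl⟩, Or.inl rfl]
    · rintro (rfl | ⟨⟨x, y⟩, rfl⟩)
      exacts [Or.inr ⟨_, rfl⟩, Or.inl ⟨x, y, _, rfl⟩]
  subst hq2
  have : CharP F 2 := charP_of_card_eq_prime_pow hq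
  obtain rfl : ⇑(iterateFrobenius F 2 (e + 1)) = σ :=
    funext fun t => by rw [iterateFrobenius_def, hσ]
  refine ⟨by rw [Tits.ncard_ovoid, hq], Tits.noThreeCollinear_ovoid fun t => ?_, ?_⟩
  · rw [← iterateFrobenius_add_apply, iterateFrobenius_def,
      show e + 1 + (e + 1) = 2 * e + 1 + 1 by ring, pow_succ, pow_mul, ← hq, FiniteField.pow_card]
  · rintro ⟨Q, hQ⟩
    have hk : 3 ≤ 2 ^ (e + 1) :=
      le_trans (by norm_num) (Nat.pow_le_pow_right two_pos (by omega : 2 ≤ e + 1))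
    refine Tits.ovoid_ne_quadric hσ hk ?_ Q hQ
    rw [hq]
    calc 2 ^ (e + 1) + 1 < 2 ^ (e + 1) * 2 := by omega
      _ = 2 ^ (e + 2) := by ring
      _ ≤ 2 ^ (2 * e + 1) := Nat.pow_le_pow_right two_pos (by omega)
end

section
/- (Thas) Every generalised k-arc in PG(3n−1,q) satisfies k ≤ q^n + 2; if q is odd, then k ≤ q^n + 1. -/
open Module Submodule Finset

/-- A generalised `k`-arc in `PG(3n−1,q)`: a set of `k` subspaces of `F_q^{3n}`, each
of vector-space dimension `n`, such that any three distinct members span `F_q^{3n}`. -/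
def IsGeneralisedArc (n : ℕ) (F : Type) [Field F]
    (K : Finset (Submodule F (Fin (3 * n) → F))) : Prop :=
  (∀ W ∈ K, Module.finrank F W = n) ∧
    ∀ W₁ ∈ K, ∀ W₂ ∈ K, ∀ W₃ ∈ K, W₁ ≠ W₂ → W₁ ≠ W₃ → W₂ ≠ W₃ →
      W₁ ⊔ W₂ ⊔ W₃ = ⊤

lemma arc_triple {n : ℕ} {F : Type} [Field F]
    {W₁ W₂ W₃ : Submodule F (Fin (3 * n) → F)}
    (h1 : finrank F W₁ = n) (h2 : finrank F W₂ = n) (h3 : finrank F W₃ = n)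
    (hsup : W₁ ⊔ W₂ ⊔ W₃ = ⊤) :
    finrank F ↥(W₁ ⊔ W₂) = 2 * n ∧ (W₁ ⊔ W₂) ⊓ W₃ = ⊥ := by
  have hV : finrank F (Fin (3 * n) → F) = 3 * n := Module.finrank_fin_fun F
  have e1 := Submodule.finrank_sup_add_finrank_inf_eq W₁ W₂
  have e2 := Submodule.finrank_sup_add_finrank_inf_eq (W₁ ⊔ W₂) W₃
  rw [hsup, finrank_top, hV, h3] at e2
  rw [h1, h2] at e1
  have hz : finrank F ↥((W₁ ⊔ W₂) ⊓ W₃) = 0 := by omega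
  refine ⟨by omega, Submodule.finrank_eq_zero.mp hz⟩

lemma arc_inf_sup {n : ℕ} {F : Type} [Field F]
    {W₁ W₂ W₃ : Submodule F (Fin (3 * n) → F)}
    (h1 : finrank F W₁ = n) (h2 : finrank F W₂ = n) (h3 : finrank F W₃ = n)
    (hsup : W₁ ⊔ W₂ ⊔ W₃ = ⊤) :
    (W₁ ⊔ W₂) ⊓ (W₁ ⊔ W₃) = W₁ := by
  have hV : finrank F (Fin (3 * n) → F) = 3 * n := Module.finrank_fin_fun F
  have hsup' : W₁ ⊔ W₃ ⊔ W₂ = ⊤ := by rw [← hsup]; rw [sup_right_comm]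
  have r12 : finrank F ↥(W₁ ⊔ W₂) = 2 * n := (arc_triple h1 h2 h3 hsup).1
  have r13 : finrank F ↥(W₁ ⊔ W₃) = 2 * n := (arc_triple h1 h3 h2 hsup').1
  have hsups : (W₁ ⊔ W₂) ⊔ (W₁ ⊔ W₃) = ⊤ := by
    rw [← hsup, sup_sup_sup_comm, sup_idem, ← sup_assoc]
  have e := Submodule.finrank_sup_add_finrank_inf_eq (W₁ ⊔ W₂) (W₁ ⊔ W₃)
  rw [hsups, finrank_top, hV, r12, r13] at e
  have hle : W₁ ≤ (W₁ ⊔ W₂) ⊓ (W₁ ⊔ W₃) := le_inf le_sup_left le_sup_left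
  exact (Submodule.eq_of_le_of_finrank_eq hle (by omega)).symm

lemma even_card_of_fpf_involution {α : Type*} [DecidableEq α] (s : Finset α) (f : α → α)
    (hmem : ∀ a ∈ s, f a ∈ s) (hinv : ∀ a ∈ s, f (f a) = a) (hne : ∀ a ∈ s, f a ≠ a) :
    Even s.card := by
  induction s using Finset.strongInduction with
  | _ s ih =>
    rcases s.eq_empty_or_nonempty with rfl | ⟨a, ha⟩
    · simp
    · have hfa : f a ∈ s := hmem a ha
      have hnea : f a ≠ a := hne a ha
      set t := (s.erase a).erase (f a) with ht
      have htss : t ⊂ s :=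
        Finset.ssubset_of_subset_of_ssubset (Finset.erase_subset _ _) (Finset.erase_ssubset ha)
      have hmemt : ∀ b ∈ t, b ∈ s ∧ b ≠ a ∧ b ≠ f a := by
        intro b hb
        rw [ht, Finset.mem_erase, Finset.mem_erase] at hb
        exact ⟨hb.2.2, hb.2.1, hb.1⟩
      have hft : ∀ b ∈ t, f b ∈ t := by
        intro b hb
        obtain ⟨hbs, hba, hbfa⟩ := hmemt b hb
        rw [ht, Finset.mem_erase, Finset.mem_erase]
        refine ⟨?_, ?_, hmem b hbs⟩
        · intro h
          exact hba (by rw [← hinv b hbs, h, hinv a ha])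
        · intro h
          exact hbfa (by rw [← hinv b hbs, h])
      have heven : Even t.card :=
        ih t htss (fun b hb => hft b hb) (fun b hb => hinv b (hmemt b hb).1)
          (fun b hb => hne b (hmemt b hb).1)
      have hfae : f a ∈ s.erase a := Finset.mem_erase.mpr ⟨hnea, hfa⟩
      have h1 : (s.erase a).card = s.card - 1 := Finset.card_erase_of_mem ha
      have h2 : t.card = (s.erase a).card - 1 := Finset.card_erase_of_mem hfae
      have h3 : 0 < s.card := Finset.card_pos.mpr ⟨a, ha⟩
      have h4 : 0 < (s.erase a).card := Finset.card_pos.mpr ⟨f a, hfae⟩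
      rw [Nat.even_iff] at heven ⊢
      omega

/-- Thas: every generalised `k`-arc in `PG(3n−1,q)` satisfies `k ≤ qⁿ + 2`;
if `q` is odd then `k ≤ qⁿ + 1`. -/
theorem generalised_arc_card_bound (n q k : ℕ) (hn : 1 ≤ n)
    (F : Type) [Field F] [Fintype F] (hq : Fintype.card F = q)
    (K : Finset (Submodule F (Fin (3 * n) → F)))
    (hK : IsGeneralisedArc n F K) (hk : K.card = k) :
    k ≤ q ^ n + 2 ∧ (Odd q → k ≤ q ^ n + 1) := by
  classical
  subst hq hk
  obtain ⟨hrank, hspan⟩ := hK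
  set Q := Fintype.card F ^ n with hQdef
  have hq2 : 2 ≤ Fintype.card F := Fintype.one_lt_card
  have hQ2 : 2 ≤ Q := Nat.one_lt_pow (by omega) hq2
  have hQsq : Q ≤ Q ^ 2 := Nat.le_self_pow two_ne_zero Q
  have hQcub : Q ≤ Q ^ 3 := Nat.le_self_pow three_ne_zero Q
  have hVrank : finrank F (Fin (3 * n) → F) = 3 * n := Module.finrank_fin_fun F
  have hcardV : Fintype.card (Fin (3 * n) → F) = Q ^ 3 := by
    rw [card_eq_pow_finrank (K := F), hVrank, hQdef, mul_comm 3 n, pow_mul]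
  have hp2 : Fintype.card F ^ (2 * n) = Q ^ 2 := by
    rw [hQdef, mul_comm 2 n, pow_mul]
  have hcardS : ∀ S : Submodule F (Fin (3 * n) → F),
      (S : Set (Fin (3 * n) → F)).toFinset.card = Fintype.card F ^ finrank F S := by
    intro S
    rw [Set.toFinset_card]
    exact card_eq_pow_finrank
  by_cases hsmall : K.card ≤ 3
  · exact ⟨by omega, fun _ => by omega⟩
  push_neg at hsmall
  -- the difference finsets
  set T : Submodule F (Fin (3 * n) → F) → Submodule F (Fin (3 * n) → F) →
      Finset (Fin (3 * n) → F) :=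
    fun A B => ((A ⊔ B : Submodule F (Fin (3 * n) → F)) : Set (Fin (3 * n) → F)).toFinset \
      (A : Set (Fin (3 * n) → F)).toFinset with hTdef
  have third : ∀ W₁ ∈ K, ∀ W₂ ∈ K, W₁ ≠ W₂ → ∃ W₃ ∈ K, W₁ ≠ W₃ ∧ W₂ ≠ W₃ := by
    intro W₁ h₁ W₂ h₂ hne
    have h₂' : W₂ ∈ K.erase W₁ := Finset.mem_erase.mpr ⟨hne.symm, h₂⟩
    have hc1 : (K.erase W₁).card = K.card - 1 := Finset.card_erase_of_mem h₁
    have hc2 : ((K.erase W₁).erase W₂).card = (K.erase W₁).card - 1 :=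
      Finset.card_erase_of_mem h₂'
    have : 0 < ((K.erase W₁).erase W₂).card := by omega
    obtain ⟨W₃, hW₃⟩ := Finset.card_pos.mp this
    rw [Finset.mem_erase, Finset.mem_erase] at hW₃
    exact ⟨W₃, hW₃.2.2, (hW₃.2.1).symm, (hW₃.1).symm⟩
  have rank2 : ∀ W₁ ∈ K, ∀ W₂ ∈ K, W₁ ≠ W₂ → finrank F ↥(W₁ ⊔ W₂) = 2 * n := by
    intro W₁ h₁ W₂ h₂ hne
    obtain ⟨W₃, h₃, hne13, hne23⟩ := third W₁ h₁ W₂ h₂ hne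
    exact (arc_triple (hrank W₁ h₁) (hrank W₂ h₂) (hrank W₃ h₃)
      (hspan W₁ h₁ W₂ h₂ W₃ h₃ hne hne13 hne23)).1
  have cardT : ∀ W₁ ∈ K, ∀ W₂ ∈ K, W₁ ≠ W₂ → (T W₁ W₂).card = Q ^ 2 - Q := by
    intro W₁ h₁ W₂ h₂ hne
    have hsub : (W₁ : Set (Fin (3 * n) → F)).toFinset ⊆
        ((W₁ ⊔ W₂ : Submodule F (Fin (3 * n) → F)) : Set (Fin (3 * n) → F)).toFinset := by
      apply Set.toFinset_subset_toFinset.mpr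
      exact_mod_cast (le_sup_left : W₁ ≤ W₁ ⊔ W₂)
    rw [hTdef]
    rw [Finset.card_sdiff_of_subset hsub, hcardS, hcardS, rank2 W₁ h₁ W₂ h₂ hne, hrank W₁ h₁, hp2]
  have disjT : ∀ W₁ ∈ K, ∀ W₂ ∈ K, ∀ W₃ ∈ K, W₁ ≠ W₂ → W₁ ≠ W₃ → W₂ ≠ W₃ →
      Disjoint (T W₁ W₂) (T W₁ W₃) := by
    intro W₁ h₁ W₂ h₂ W₃ h₃ hne12 hne13 hne23
    rw [Finset.disjoint_left]
    intro x hx hx'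
    rw [hTdef, Finset.mem_sdiff, Set.mem_toFinset, Set.mem_toFinset] at hx hx'
    have hinf := arc_inf_sup (hrank W₁ h₁) (hrank W₂ h₂) (hrank W₃ h₃)
      (hspan W₁ h₁ W₂ h₂ W₃ h₃ hne12 hne13 hne23)
    have : x ∈ (W₁ ⊔ W₂) ⊓ (W₁ ⊔ W₃) := Submodule.mem_inf.mpr ⟨hx.1, hx'.1⟩
    rw [hinf] at this
    exact hx.2 this
  have bigcard : ∀ W₁ ∈ K, ((K.erase W₁).biUnion (T W₁)).card = (K.card - 1) * (Q ^ 2 - Q) := by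
    intro W₁ h₁
    rw [Finset.card_biUnion]
    · rw [Finset.sum_congr rfl (fun W hW => cardT W₁ h₁ W (Finset.mem_of_mem_erase hW)
        (Finset.ne_of_mem_erase hW).symm)]
      rw [Finset.sum_const, smul_eq_mul, Finset.card_erase_of_mem h₁]
    · intro x hx y hy hxy
      exact disjT W₁ h₁ x (Finset.mem_of_mem_erase hx) y (Finset.mem_of_mem_erase hy)
        (Finset.ne_of_mem_erase hx).symm (Finset.ne_of_mem_erase hy).symm hxy
  have subU : ∀ W₁ ∈ K, (K.erase W₁).biUnion (T W₁) ⊆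
      Finset.univ \ (W₁ : Set (Fin (3 * n) → F)).toFinset := by
    intro W₁ h₁ x hx
    obtain ⟨W, hW, hxW⟩ := Finset.mem_biUnion.mp hx
    rw [hTdef, Finset.mem_sdiff] at hxW
    exact Finset.mem_sdiff.mpr ⟨Finset.mem_univ x, hxW.2⟩
  have cardU : ∀ W₁ ∈ K,
      (Finset.univ \ (W₁ : Set (Fin (3 * n) → F)).toFinset).card = Q ^ 3 - Q := by
    intro W₁ h₁
    rw [Finset.card_sdiff_of_subset (Finset.subset_univ _), Finset.card_univ, hcardV, hcardS,
      hrank W₁ h₁]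
  obtain ⟨W₀, h₀⟩ := Finset.card_pos.mp (show 0 < K.card by omega)
  have bound1 : K.card ≤ Q + 2 := by
    have hle := Finset.card_le_card (subU W₀ h₀)
    rw [bigcard W₀ h₀, cardU W₀ h₀] at hle
    by_contra hcon
    push_neg at hcon
    have ha : Q + 2 ≤ K.card - 1 := by omega
    have := le_trans (Nat.mul_le_mul_right (Q ^ 2 - Q) ha) hle
    zify [hQsq, hQcub] at this
    have hQ2' : (2 : ℤ) ≤ (Q : ℤ) := by exact_mod_cast hQ2
    nlinarith
  refine ⟨bound1, fun hodd => ?_⟩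
  by_contra hgt
  push_neg at hgt
  have hkc : K.card = Q + 2 := le_antisymm bound1 hgt
  -- find v outside all members of K
  obtain ⟨v, hv⟩ : ∃ v, ∀ W ∈ K, v ∉ W := by
    by_contra hcon
    push_neg at hcon
    have hsub : (Finset.univ : Finset (Fin (3 * n) → F)) ⊆
        insert 0 (K.biUnion (fun W => ((W : Set (Fin (3 * n) → F)).toFinset).erase 0)) := by
      intro x _
      obtain ⟨W, hW, hxW⟩ := hcon x
      by_cases hx0 : x = 0
      · exact hx0 ▸ Finset.mem_insert_self _ _
      · exact Finset.mem_insert_of_mem (Finset.mem_biUnion.mpr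
          ⟨W, hW, Finset.mem_erase.mpr ⟨hx0, Set.mem_toFinset.mpr hxW⟩⟩)
    have h1 := Finset.card_le_card hsub
    have h2 := Finset.card_biUnion_le (s := K)
      (t := fun W => ((W : Set (Fin (3 * n) → F)).toFinset).erase 0)
    have h3 : ∑ W ∈ K, (((W : Set (Fin (3 * n) → F)).toFinset).erase 0).card
        = (Q + 2) * (Q - 1) := by
      rw [Finset.sum_congr rfl (fun W hW => by
        rw [Finset.card_erase_of_mem (Set.mem_toFinset.mpr (W.zero_mem)), hcardS,
          hrank W hW])]
      rw [Finset.sum_const, smul_eq_mul, hkc]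
    have h4 := Finset.card_insert_le (0 : Fin (3 * n) → F)
      (K.biUnion (fun W => ((W : Set (Fin (3 * n) → F)).toFinset).erase 0))
    rw [Finset.card_univ, hcardV] at h1
    rw [h3] at h2
    have hfin : Q ^ 3 ≤ (Q + 2) * (Q - 1) + 1 := by omega
    zify [show 1 ≤ Q by omega] at hfin
    have hQ2' : (2 : ℤ) ≤ (Q : ℤ) := by exact_mod_cast hQ2
    nlinarith
  -- exact cover: each W ∈ K has a unique partner through v
  have cover : ∀ W ∈ K, ∃ W' ∈ K.erase W, v ∈ W ⊔ W' := by
    intro W hW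
    have hcards : ((K.erase W).biUnion (T W)).card = Q ^ 3 - Q := by
      rw [bigcard W hW, hkc]
      have h1 : Q + 2 - 1 = Q + 1 := by omega
      rw [h1]
      zify [hQsq, hQcub]
      ring
    have heq := Finset.eq_of_subset_of_card_le (subU W hW)
      (le_of_eq (by rw [hcards, cardU W hW]))
    have hvmem : v ∈ Finset.univ \ (W : Set (Fin (3 * n) → F)).toFinset :=
      Finset.mem_sdiff.mpr ⟨Finset.mem_univ v, by
        rw [Set.mem_toFinset]; exact fun h => hv W hW h⟩
    rw [← heq] at hvmem
    obtain ⟨W', hW', hvT⟩ := Finset.mem_biUnion.mp hvmem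
    rw [hTdef, Finset.mem_sdiff, Set.mem_toFinset] at hvT
    exact ⟨W', hW', hvT.1⟩
  have uniq : ∀ W ∈ K, ∀ W' ∈ K, ∀ W'' ∈ K, W ≠ W' → W ≠ W'' → W' ≠ W'' →
      v ∈ W ⊔ W' → v ∈ W ⊔ W'' → False := by
    intro W hW W' hW' W'' hW'' h1 h2 h3 hv1 hv2
    have hinf := arc_inf_sup (hrank W hW) (hrank W' hW') (hrank W'' hW'')
      (hspan W hW W' hW' W'' hW'' h1 h2 h3)
    have : v ∈ (W ⊔ W') ⊓ (W ⊔ W'') := Submodule.mem_inf.mpr ⟨hv1, hv2⟩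
    rw [hinf] at this
    exact hv W hW this
  -- the partner function
  let f : Submodule F (Fin (3 * n) → F) → Submodule F (Fin (3 * n) → F) :=
    fun W => if h : W ∈ K then (cover W h).choose else W
  have hfspec : ∀ W (h : W ∈ K), f W ∈ K.erase W ∧ v ∈ W ⊔ f W := by
    intro W h
    have := (cover W h).choose_spec
    simp only [f, dif_pos h]
    exact ⟨this.1, this.2⟩
  have hfmem : ∀ W ∈ K, f W ∈ K := fun W h => Finset.mem_of_mem_erase (hfspec W h).1
  have hfne : ∀ W ∈ K, f W ≠ W := fun W h => Finset.ne_of_mem_erase (hfspec W h).1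
  have hfv : ∀ W ∈ K, v ∈ W ⊔ f W := fun W h => (hfspec W h).2
  have hinv : ∀ W ∈ K, f (f W) = W := by
    intro W hW
    by_contra hne2
    have h1 : f W ∈ K := hfmem W hW
    have h2 : f (f W) ∈ K := hfmem (f W) h1
    exact uniq (f W) h1 W hW (f (f W)) h2 (hfne W hW) ((hfne (f W) h1).symm)
      (fun h => hne2 h.symm) (by rw [sup_comm]; exact hfv W hW) (hfv (f W) h1)
  have heven : Even K.card := even_card_of_fpf_involution K f hfmem hinv hfne
  have hoddQ : Odd Q := hodd.pow
  rw [hkc, Nat.even_iff] at heven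
  rw [Nat.odd_iff] at hoddQ
  omega
end

section
/- (Thas) Let O be a pseudo-oval of PG(3n−1,q), i.e., a generalised (q^n+1)-arc. Then for each element π ∈ O there is exactly one subspace τ of F_q^{3n} of vector-space dimension 2n such that π ⊆ τ and τ ∩ π′ = {0} for every π′ ∈ O with π′ ≠ π (the tangent space of O at π). -/
/-!
Since any three members of `O` span `V = F^{3n}`, the other `qⁿ` members of `O` map to `qⁿ`
pairwise trivially intersecting `n`-spaces of the `2n`-space `V ⧸ π`, and the tangent spaces
at `π` are the preimages of the `n`-spaces of `V ⧸ π` meeting all of these trivially.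

Such a partial spread `S` of deficiency one has exactly one completing `n`-space. Fix `s ∈ S`.
For `x ∉ s`, the coset `x + s` meets each of the other `qⁿ - 1` members in one point, and
these points are distinct, so exactly one point of the coset lies on no member of `S`. As the
vectors of a space with more than two elements sum to zero, that point is `x + ∑ₜ pₜ x`, where
`pₜ` is the projection onto `s` along `t`; it is linear in `x`, and its image on another member
of `S` completes the spread (when `qⁿ = 2`, the graph of any isomorphism between the two
members does). Any completing space consists of such points, hence is this one.
-/

open Module Submodule Finset

section Sums

variable {F : Type*} [Field F] [Fintype F]

theorem sum_univ_pi_eq_zero {ι : Type*} [Fintype ι] [DecidableEq ι]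
    (h : 2 < Fintype.card (ι → F)) : ∑ v : ι → F, v = 0 := by
  rw [Fintype.card_fun] at h
  ext i
  rw [Finset.sum_apply, ← Fintype.piFinset_univ, Fintype.sum_piFinset_apply (fun c : F => c),
    Finset.card_univ, Pi.zero_apply]
  rcases hι : Fintype.card ι with _ | _ | k
  · rw [hι, pow_zero] at h
    omega
  · rw [hι, pow_one] at h
    simpa using FiniteField.sum_pow_lt_card_sub_one (K := F) 1 (by omega)
  · rw [Nat.add_sub_cancel, pow_succ, mul_nsmul, card_nsmul_eq_zero]

theorem sum_univ_eq_zero_of_two_lt_card {M : Type*} [AddCommGroup M] [Module F M] [Fintype M]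
    (h : 2 < Fintype.card M) : ∑ v : M, v = 0 := by
  let e := (Module.finBasis F M).equivFun
  calc ∑ v : M, v = ∑ w, e.symm w := (e.symm.toEquiv.sum_comp _).symm
    _ = e.symm (∑ w, w) := (map_sum _ _ _).symm
    _ = 0 := by rw [sum_univ_pi_eq_zero (Fintype.card_congr e.toEquiv ▸ h), map_zero]

end Sums

theorem Finset.notMem_iff_eq_neg_sum {M : Type*} [AddCommGroup M] [Fintype M] [DecidableEq M]
    (hM : ∑ m : M, m = 0) {A : Finset M} (hA : #A + 1 = Fintype.card M) {y : M} :
    y ∉ A ↔ y = -∑ a ∈ A, a := by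
  obtain ⟨z, hz⟩ := card_eq_one.mp (show #Aᶜ = 1 by rw [card_compl]; omega)
  have hzA : ∑ a ∈ A, a + z = 0 := by rw [← hM, ← sum_add_sum_compl A, hz, sum_singleton]
  rw [← mem_compl, hz, mem_singleton, eq_neg_of_add_eq_zero_right hzA]

section Spread

variable {F V : Type*} [Field F] [AddCommGroup V] [Module F V]

structure IsPartialSpread (n : ℕ) (S : Finset (Submodule F V)) : Prop where
  finrank_eq : ∀ s ∈ S, finrank F s = n
  pairwise_disjoint : (S : Set (Submodule F V)).Pairwise Disjoint

theorem exists_forall_disjoint_of_linearMap {W : Type*} [AddCommGroup W] [Module F W]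
    [FiniteDimensional F W] {S : Finset (Submodule F V)} (hS : S.Nonempty) (φ : W →ₗ[F] V)
    (hφ : ∀ w ≠ 0, ∀ t ∈ S, φ w ∉ t) :
    ∃ T : Submodule F V, finrank F T = finrank F W ∧ ∀ t ∈ S, Disjoint T t := by
  obtain ⟨s, hs⟩ := hS
  have hφ0 : ∀ w, φ w = 0 → w = 0 := fun w hw =>
    not_not.mp fun h => hφ w h s hs (hw ▸ zero_mem s)
  refine ⟨LinearMap.range φ, LinearMap.finrank_range_of_inj
    (LinearMap.ker_eq_bot.mp (LinearMap.ker_eq_bot'.mpr hφ0)), fun t ht => disjoint_def.mpr ?_⟩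
  rintro _ ⟨w, rfl⟩ hwt
  by_contra h
  exact hφ w (fun hw => h (by rw [hw, map_zero])) t ht hwt

namespace IsPartialSpread

variable {n : ℕ} {S : Finset (Submodule F V)} {s : Submodule F V}

theorem card_eq_pow [Fintype F] (hS : IsPartialSpread n S) (hs : s ∈ S) [Fintype s] :
    Fintype.card s = Fintype.card F ^ n := by
  rw [card_eq_pow_finrank (K := F), hS.finrank_eq s hs]

variable {P : Submodule F V → V →ₗ[F] s} {x : V}

theorem injOn_neg_proj (hS : IsPartialSpread n S) (hP : ∀ t ∈ S.erase s, ∀ x, x - P t x ∈ t)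
    (hx : x ∉ s) : Set.InjOn (fun t => -P t x) (S.erase s) := by
  intro t ht t' ht' h
  by_contra hne
  have h1 := hP t ht x
  rw [neg_inj.mp h] at h1
  have h0 := disjoint_def.mp
    (hS.pairwise_disjoint (mem_of_mem_erase ht) (mem_of_mem_erase ht') hne) _ h1 (hP t' ht' x)
  exact hx (by rw [sub_eq_zero.mp h0]; exact (P t' x).2)

open scoped Classical in
theorem forall_add_notMem_iff (hS : IsPartialSpread n S) (hs : s ∈ S)
    (hP : ∀ t ∈ S.erase s, ∀ x, x - P t x ∈ t) (hx : x ∉ s) (y : s) :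
    (∀ t ∈ S, x + y ∉ t) ↔ y ∉ (S.erase s).image fun t => -P t x := by
  constructor
  · intro hy hyA
    obtain ⟨t, ht, rfl⟩ := mem_image.mp hyA
    exact hy t (mem_of_mem_erase ht) (by simpa [sub_eq_add_neg] using hP t ht x)
  · intro hyA t ht hxyt
    obtain rfl | hts := eq_or_ne t s
    · exact hx (by simpa using sub_mem hxyt y.2)
    refine hyA (mem_image.mpr ⟨t, mem_erase.mpr ⟨hts, ht⟩, ?_⟩)
    have hyt : ((y + P t x : s) : V) ∈ t := by
      simpa using sub_mem hxyt (hP t (mem_erase.mpr ⟨hts, ht⟩) x)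
    have h0 := disjoint_def.mp (hS.pairwise_disjoint hs ht hts.symm) _ (y + P t x).2 hyt
    rw [← neg_eq_of_add_eq_zero_left (Subtype.ext h0)]

variable [FiniteDimensional F V]

theorem isCompl (hS : IsPartialSpread n S) (hV : finrank F V = 2 * n) {s t : Submodule F V}
    (hs : s ∈ S) (ht : t ∈ S) (hst : s ≠ t) : IsCompl s t :=
  (isCompl_iff_disjoint s t (by rw [hV, hS.finrank_eq s hs, hS.finrank_eq t ht]; omega)).mpr
    (hS.pairwise_disjoint hs ht hst)

-- `P t` is the projection onto `s` along `t`, made total in `t` so that it can be summed.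
theorem exists_proj (hS : IsPartialSpread n S) (hV : finrank F V = 2 * n) (hs : s ∈ S) :
    ∃ P : Submodule F V → V →ₗ[F] s, ∀ t ∈ S.erase s, ∀ x, x - P t x ∈ t := by
  have : ∀ t ∈ S.erase s, ∃ P : V →ₗ[F] s, ∀ x, x - P x ∈ t := fun t ht =>
    ⟨s.projectionOnto t (hS.isCompl hV hs (mem_of_mem_erase ht) (ne_of_mem_erase ht).symm),
      fun x => sub_projection_mem _ x⟩
  choose! P hP using this
  exact ⟨P, hP⟩

variable [Fintype F]

theorem eq_of_forall_add_notMem (hS : IsPartialSpread n S) (hV : finrank F V = 2 * n)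
    (hcard : #S = Fintype.card F ^ n) (hs : s ∈ S) (hx : x ∉ s) {y y' : s}
    (hy : ∀ t ∈ S, x + y ∉ t) (hy' : ∀ t ∈ S, x + y' ∉ t) : y = y' := by
  classical
  have := Module.finite_of_finite F (M := s)
  have := Fintype.ofFinite s
  obtain ⟨P, hP⟩ := hS.exists_proj hV hs
  have hA : #((S.erase s).image fun t => -P t x)ᶜ ≤ 1 := by
    rw [card_compl, card_image_of_injOn (hS.injOn_neg_proj hP hx), card_erase_of_mem hs,
      hS.card_eq_pow hs, hcard]
    omega
  rw [hS.forall_add_notMem_iff hs hP hx, ← mem_compl] at hy hy'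
  exact card_le_one.mp hA y hy y' hy'

theorem forall_add_sum_proj_notMem (hS : IsPartialSpread n S) (hcard : #S = Fintype.card F ^ n)
    (hq : 2 < Fintype.card F ^ n) (hs : s ∈ S) (hP : ∀ t ∈ S.erase s, ∀ x, x - P t x ∈ t)
    (hx : x ∉ s) : ∀ t ∈ S, x + ↑(∑ t ∈ S.erase s, P t x) ∉ t := by
  classical
  have := Module.finite_of_finite F (M := s)
  have := Fintype.ofFinite s
  rw [hS.forall_add_notMem_iff hs hP hx,
    notMem_iff_eq_neg_sum (sum_univ_eq_zero_of_two_lt_card (F := F) (hS.card_eq_pow hs ▸ hq)),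
    sum_image (hS.injOn_neg_proj hP hx), sum_neg_distrib, neg_neg]
  rw [card_image_of_injOn (hS.injOn_neg_proj hP hx), card_erase_of_mem hs, hS.card_eq_pow hs,
    hcard]
  omega

theorem exists_disjoint (hS : IsPartialSpread n S) (hV : finrank F V = 2 * n)
    (hcard : #S = Fintype.card F ^ n) (hn : 0 < n) :
    ∃ T : Submodule F V, finrank F T = n ∧ ∀ t ∈ S, Disjoint T t := by
  have hq : 2 ≤ Fintype.card F ^ n := Fintype.one_lt_card.trans_le (Nat.le_self_pow hn.ne' _)
  obtain ⟨s, hs, s', hs', hss'⟩ := one_lt_card.mp (hcard ▸ hq)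
  suffices ∃ φ : s' →ₗ[F] V, ∀ x ≠ 0, ∀ t ∈ S, φ x ∉ t by
    obtain ⟨φ, hφ⟩ := this
    exact hS.finrank_eq s' hs' ▸ exists_forall_disjoint_of_linearMap ⟨s, hs⟩ φ hφ
  have hs's : ∀ x : s', x ≠ 0 → (x : V) ∉ s := fun x hx hxs =>
    hx (Subtype.ext (disjoint_def.mp (hS.pairwise_disjoint hs' hs hss'.symm) x x.2 hxs))
  obtain hq | hq := hq.lt_or_eq
  · obtain ⟨P, hP⟩ := hS.exists_proj hV hs
    refine ⟨s'.subtype + s.subtype ∘ₗ (∑ t ∈ S.erase s, P t) ∘ₗ s'.subtype,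
      fun x hx => ?_⟩
    simpa using hS.forall_add_sum_proj_notMem hcard hq hs hP (hs's x hx)
  · have hS2 : {s, s'} = S :=
      eq_of_subset_of_card_le (insert_subset hs (singleton_subset_iff.mpr hs'))
        (by rw [card_pair hss', hcard, hq])
    obtain ⟨e⟩ : Nonempty (s' ≃ₗ[F] s) :=
      FiniteDimensional.nonempty_linearEquiv_of_finrank_eq
        (by rw [hS.finrank_eq s hs, hS.finrank_eq s' hs'])
    refine ⟨s'.subtype + s.subtype ∘ₗ e.toLinearMap, fun x hx t ht hxt => ?_⟩
    rw [← hS2, mem_insert, mem_singleton] at ht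
    obtain rfl | rfl := ht
    · exact hs's x hx (by simpa using sub_mem hxt (e x).2)
    · have hex : (e x : V) ∈ t := by simpa using sub_mem hxt x.2
      exact hx (e.map_eq_zero_iff.mp
        (Subtype.ext (disjoint_def.mp (hS.pairwise_disjoint hs hs' hss') _ (e x).2 hex)))

theorem le_of_disjoint (hS : IsPartialSpread n S) (hV : finrank F V = 2 * n)
    (hcard : #S = Fintype.card F ^ n) {T T' : Submodule F V} (hT : finrank F T = n)
    (hTS : ∀ t ∈ S, Disjoint T t) (hT'S : ∀ t ∈ S, Disjoint T' t) : T' ≤ T := by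
  obtain ⟨s, hs⟩ : S.Nonempty := card_pos.mp (by rw [hcard]; exact pow_pos Fintype.card_pos _)
  have hTs : IsCompl T s := (isCompl_iff_disjoint T s
    (by rw [hV, hT, hS.finrank_eq s hs]; omega)).mpr (hTS s hs)
  intro v hv
  obtain rfl | hv0 := eq_or_ne v 0
  · exact zero_mem T
  have hvS : ∀ t ∈ S, v ∉ t := fun t ht hvt => hv0 (disjoint_def.mp (hT'S t ht) v hv hvt)
  obtain ⟨w, hw, y, hy, rfl⟩ := mem_sup.mp (hTs.sup_eq_top ▸ mem_top : v ∈ T ⊔ s)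
  have hws : w ∉ s := fun h => hvS s hs (add_mem h hy)
  have hwS : ∀ t ∈ S, w + ((0 : s) : V) ∉ t := fun t ht hwt =>
    hws (by rw [disjoint_def.mp (hTS t ht) w hw (by simpa using hwt)]; exact zero_mem s)
  have hy0 : (⟨y, hy⟩ : s) = 0 := hS.eq_of_forall_add_notMem hV hcard hs hws hvS hwS
  simpa [show y = 0 from congrArg Subtype.val hy0] using hw

theorem existsUnique_disjoint (hS : IsPartialSpread n S) (hV : finrank F V = 2 * n)
    (hcard : #S = Fintype.card F ^ n) (hn : 0 < n) :
    ∃! T : Submodule F V, finrank F T = n ∧ ∀ t ∈ S, Disjoint T t := by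
  obtain ⟨T, hT, hTS⟩ := hS.exists_disjoint hV hcard hn
  exact ⟨T, ⟨hT, hTS⟩, fun T' ⟨hT', hT'S⟩ =>
    eq_of_le_of_finrank_eq (hS.le_of_disjoint hV hcard hT hTS hT'S) (hT'.trans hT.symm)⟩

end IsPartialSpread

end Spread

section Quotient

variable {K M : Type*} [Field K] [AddCommGroup M] [Module K M] (p : Submodule K M)

theorem Submodule.finrank_map_mkQ_add_finrank_inf [FiniteDimensional K M] (X : Submodule K M) :
    finrank K (X.map p.mkQ) + finrank K ↥(X ⊓ p) = finrank K X := by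
  have h := LinearMap.finrank_range_add_finrank_ker (p.mkQ.domRestrict X)
  rwa [LinearMap.range_domRestrict, LinearMap.ker_domRestrict, ker_mkQ,
    ← Submodule.finrank_map_subtype_eq, map_comap_subtype] at h

theorem Submodule.disjoint_map_mkQ_iff {X Y : Submodule K M} (hY : Disjoint p Y) :
    Disjoint (X.map p.mkQ) (Y.map p.mkQ) ↔ Disjoint (p ⊔ X) Y := by
  rw [disjoint_iff, disjoint_iff, ← (comap_injective_of_surjective p.mkQ_surjective).eq_iff,
    comap_inf, comap_map_mkQ, comap_map_mkQ, comap_bot, ker_mkQ, inf_comm,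
    sup_inf_assoc_of_le _ le_sup_left, sup_eq_left, inf_comm, ← le_bot_iff, ← hY.eq_bot]
  exact ⟨fun h => le_inf h inf_le_right, fun h => h.trans inf_le_left⟩

theorem Submodule.existsUnique_le_of_existsUnique_map {P : Submodule K (M ⧸ p) → Prop}
    (h : ∃! T, P T) : ∃! τ, p ≤ τ ∧ P (τ.map p.mkQ) := by
  obtain ⟨T, hT, hTu⟩ := h
  refine ⟨T.comap p.mkQ, ⟨le_comap_mkQ p T, ?_⟩, fun τ ⟨hpτ, hτ⟩ => ?_⟩
  · rwa [map_comap_eq_of_surjective p.mkQ_surjective]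
  · rw [← hTu _ hτ, comap_map_mkQ, sup_eq_right.mpr hpτ]

end Quotient

namespace IsGeneralisedArc

variable {n : ℕ} {F : Type} [Field F] {O : Finset (Submodule F (Fin (3 * n) → F))}
  {A B C : Submodule F (Fin (3 * n) → F)}

theorem disjoint_sup (hO : IsGeneralisedArc n F O) (hA : A ∈ O) (hB : B ∈ O) (hC : C ∈ O)
    (hAB : A ≠ B) (hAC : A ≠ C) (hBC : B ≠ C) : Disjoint (A ⊔ B) C := by
  have h := Submodule.finrank_sup_add_finrank_inf_eq (A ⊔ B) C
  have h' := Submodule.finrank_sup_add_finrank_inf_eq A B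
  rw [hO.2 A hA B hB C hC hAB hAC hBC, finrank_top, finrank_fin_fun, hO.1 C hC] at h
  rw [hO.1 A hA, hO.1 B hB] at h'
  exact disjoint_iff.mpr (Submodule.finrank_eq_zero.mp (by omega))

theorem disjoint (hO : IsGeneralisedArc n F O) (hO3 : 3 ≤ #O) (hA : A ∈ O) (hB : B ∈ O)
    (hAB : A ≠ B) : Disjoint A B := by
  obtain ⟨C, hC, hCB⟩ :=
    exists_mem_ne (s := O.erase A) (by rw [card_erase_of_mem hA]; omega) B
  obtain ⟨hCA, hC⟩ := mem_erase.mp hC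
  exact (hO.disjoint_sup hA hC hB hCA.symm hAB hCB).mono_left le_sup_left

theorem disjoint_map_mkQ (hO : IsGeneralisedArc n F O) (hO3 : 3 ≤ #O)
    {π ρ₁ ρ₂ : Submodule F (Fin (3 * n) → F)} (hπ : π ∈ O) (hρ₁ : ρ₁ ∈ O) (hρ₂ : ρ₂ ∈ O)
    (hρ₁π : ρ₁ ≠ π) (hρ₂π : ρ₂ ≠ π) (hρ₁₂ : ρ₁ ≠ ρ₂) :
    Disjoint (ρ₁.map π.mkQ) (ρ₂.map π.mkQ) := by
  rw [disjoint_map_mkQ_iff _ (hO.disjoint hO3 hπ hρ₂ hρ₂π.symm)]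
  exact hO.disjoint_sup hπ hρ₁ hρ₂ hρ₁π.symm hρ₂π.symm hρ₁₂

theorem isPartialSpread_map_mkQ (hO : IsGeneralisedArc n F O) (hO3 : 3 ≤ #O)
    {π : Submodule F (Fin (3 * n) → F)} (hπ : π ∈ O) :
    IsPartialSpread n ((O.erase π).image (map π.mkQ)) where
  finrank_eq := by
    simp only [forall_mem_image, mem_erase]
    rintro ρ ⟨hρπ, hρ⟩
    have h := π.finrank_map_mkQ_add_finrank_inf ρ
    rwa [disjoint_iff.mp (hO.disjoint hO3 hρ hπ hρπ), finrank_bot, add_zero, hO.1 ρ hρ] at h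
  pairwise_disjoint := by
    simp only [Set.Pairwise, mem_coe, forall_mem_image, mem_erase]
    rintro ρ₁ ⟨hρ₁π, hρ₁⟩ ρ₂ ⟨hρ₂π, hρ₂⟩ hne
    exact hO.disjoint_map_mkQ hO3 hπ hρ₁ hρ₂ hρ₁π hρ₂π (fun h => hne (h ▸ rfl))

theorem card_image_map_mkQ (hO : IsGeneralisedArc n F O) (hO3 : 3 ≤ #O) (hn : 0 < n)
    {π : Submodule F (Fin (3 * n) → F)} (hπ : π ∈ O) :
    #((O.erase π).image (map π.mkQ)) = #O - 1 := by
  rw [card_image_of_injOn, card_erase_of_mem hπ]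
  intro ρ₁ hρ₁ ρ₂ hρ₂ h
  have hdim := (hO.isPartialSpread_map_mkQ hO3 hπ).finrank_eq _ (mem_image_of_mem _ hρ₁)
  obtain ⟨hρ₁π, hρ₁⟩ := mem_erase.mp hρ₁
  obtain ⟨hρ₂π, hρ₂⟩ := mem_erase.mp hρ₂
  by_contra hne
  have hbot := disjoint_self.mp (h ▸ hO.disjoint_map_mkQ hO3 hπ hρ₁ hρ₂ hρ₁π hρ₂π hne)
  rw [h, hbot, finrank_bot] at hdim
  omega

end IsGeneralisedArc

/-- Thas: if `O` is a pseudo-oval of `PG(3n−1,q)` (a generalised `(qⁿ+1)`-arc), then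
every element `π` of `O` lies in exactly one `2n`-dimensional subspace `τ` of
`F_q^{3n}` meeting every other element of `O` trivially (the tangent space at `π`). -/
theorem pseudo_oval_tangent_space (n q : ℕ) (hn : 1 ≤ n)
    (F : Type) [Field F] [Fintype F] (hq : Fintype.card F = q)
    (O : Finset (Submodule F (Fin (3 * n) → F)))
    (hO : IsGeneralisedArc n F O) (hcard : O.card = q ^ n + 1) :
    ∀ π ∈ O, ∃! τ : Submodule F (Fin (3 * n) → F),
      Module.finrank F τ = 2 * n ∧ π ≤ τ ∧
        ∀ π' ∈ O, π' ≠ π → τ ⊓ π' = ⊥ := by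
  intro π hπ
  subst hq
  have hO3 : 3 ≤ #O := by
    have := Nat.one_lt_pow (by omega : n ≠ 0) (Fintype.one_lt_card (α := F))
    omega
  have hQ : finrank F ((Fin (3 * n) → F) ⧸ π) = 2 * n := by
    have := π.finrank_quotient_add_finrank
    rw [finrank_fin_fun, hO.1 π hπ] at this
    omega
  have hT := (hO.isPartialSpread_map_mkQ hO3 hπ).existsUnique_disjoint hQ
    (by rw [hO.card_image_map_mkQ hO3 hn hπ, hcard, Nat.add_sub_cancel]) hn
  refine (existsUnique_congr fun τ => ?_).mp (π.existsUnique_le_of_existsUnique_map hT)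
  refine (and_congr_right fun hπτ => and_congr ?_ ?_).trans and_left_comm
  · have := π.finrank_map_mkQ_add_finrank_inf τ
    rw [inf_eq_right.mpr hπτ, hO.1 π hπ] at this
    omega
  · simp only [forall_mem_image, mem_erase, and_imp, ← disjoint_iff]
    refine forall_congr' fun ρ => imp.swap.trans (forall₂_congr fun hρ hρπ => ?_)
    rw [disjoint_map_mkQ_iff _ (hO.disjoint hO3 hπ hρ (Ne.symm hρπ)), sup_eq_right.mpr hπτ]
end

section
/- (Payne–Thas) Let O be a pseudo-ovoid of PG(4n−1,q). Then: (i) every hyperplane of PG(4n−1,q) that does not contain the tangent space of O at any element of O contains exactly q^n + 1 elements of O (i.e., exactly q^n + 1 members of O are subspaces of it); and (ii) every 1-dimensional subspace of F_q^{4n} that is not contained in any element of O is contained in exactly q^n + 1 tangent spaces of O. -/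
/-!
Let `S` be the set of nonzero vectors lying in no member of `O`; the members of `O` meet
pairwise trivially. Sorting the vectors of a subspace `W` by the member of `O` containing them
expresses `|S ∩ W|` through the dimensions of the `π ⊓ W`. Applied to the whole space, to a
tangent space and to the intersection of two tangent spaces (which has dimension `2n`), this
gives the first two moments of `t v = #{π ∈ O | v ∈ τ π}` over `S`, and they show that `t` has
variance zero, hence is constantly `qⁿ + 1`: this is (ii). For (i), double count the pairs
`(v, π)` with `v ∈ S ∩ H ∩ τ π` using (ii); since `π ⊓ H` has dimension `n` or `n - 1` according
as `π ≤ H` or not, together with the count of `S ∩ H` this gives a linear equation for the number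
of `π ≤ H`.
-/

/-- A pseudo-ovoid of `PG(4n−1,q)` with tangent-space function `τ`: a set `O` of
`q^{2n} + 1` subspaces of `F_q^{4n}`, each of vector-space dimension `n`, such that
any three distinct members span a subspace of dimension `3n`, and for each `π ∈ O`
the subspace `τ π` has dimension `3n`, contains `π`, and meets every other element
of `O` trivially (`τ π` is the tangent space of `O` at `π`). -/
def IsPseudoOvoid (n q : ℕ) (F : Type) [Field F]
    (O : Finset (Submodule F (Fin (4 * n) → F)))
    (τ : Submodule F (Fin (4 * n) → F) → Submodule F (Fin (4 * n) → F)) : Prop :=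
  O.card = q ^ (2 * n) + 1 ∧
  (∀ W ∈ O, Module.finrank F W = n) ∧
  (∀ W₁ ∈ O, ∀ W₂ ∈ O, ∀ W₃ ∈ O, W₁ ≠ W₂ → W₁ ≠ W₃ → W₂ ≠ W₃ →
    Module.finrank F ↥(W₁ ⊔ W₂ ⊔ W₃) = 3 * n) ∧
  (∀ π ∈ O, Module.finrank F (τ π) = 3 * n ∧ π ≤ τ π ∧
    ∀ π' ∈ O, π' ≠ π → τ π ⊓ π' = ⊥)

open Finset Module
open scoped Classical

theorem Finset.sum_card_filter_comm {α β : Type*} (s : Finset α) (t : Finset β)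
    (r : α → β → Prop) [∀ a b, Decidable (r a b)] :
    ∑ a ∈ s, #{b ∈ t | r a b} = ∑ b ∈ t, #{a ∈ s | r a b} :=
  sum_card_bipartiteAbove_eq_sum_card_bipartiteBelow r

theorem finrank_inf_add_one_of_not_le {K W : Type*} [Field K] [AddCommGroup W] [Module K W]
    [FiniteDimensional K W] {H U : Submodule K W} (hH : finrank K H + 1 = finrank K W)
    (hU : ¬U ≤ H) : finrank K ↥(U ⊓ H) + 1 = finrank K U := by
  have hlt : finrank K H < finrank K ↥(U ⊔ H) :=
    Submodule.finrank_lt_finrank_of_lt (right_lt_sup.2 hU)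
  have hle : finrank K ↥(U ⊔ H) ≤ finrank K W := Submodule.finrank_le _
  have := Submodule.finrank_sup_add_finrank_inf_eq U H
  omega

theorem Finset.eq_of_sum_eq_of_sum_sq_eq {ι R : Type*} [CommRing R] [LinearOrder R]
    [IsStrictOrderedRing R] {s : Finset ι} {f : ι → R} {a : R}
    (h₁ : ∑ i ∈ s, f i = #s * a) (h₂ : ∑ i ∈ s, f i ^ 2 = #s * a ^ 2) :
    ∀ i ∈ s, f i = a := by
  have hvar : ∑ i ∈ s, (f i - a) ^ 2 = 0 := by
    simp_rw [sub_sq]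
    rw [sum_add_distrib, sum_sub_distrib, ← sum_mul, ← mul_sum, sum_const, nsmul_eq_mul, h₁, h₂]
    ring
  intro i hi
  exact sub_eq_zero.1 (pow_eq_zero_iff two_ne_zero |>.1
    ((sum_eq_zero_iff_of_nonneg fun j _ => sq_nonneg (f j - a)).1 hvar i hi))

section

variable {F V : Type*} [Field F] [AddCommGroup V] [Module F V]

section

variable [Fintype V]

noncomputable def pointsOff (O : Finset (Submodule F V)) : Finset V :=
  {v | v ≠ 0 ∧ ∀ π ∈ O, v ∉ π}

theorem mem_pointsOff {O : Finset (Submodule F V)} {v : V} :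
    v ∈ pointsOff O ↔ v ≠ 0 ∧ ∀ π ∈ O, v ∉ π := by
  simp [pointsOff]

end

variable [Fintype F]

theorem sum_pow_finrank_inf_hyperplane_mul [FiniteDimensional F V] {n : ℕ}
    {O : Finset (Submodule F V)} {H : Submodule F V} (hH : finrank F H + 1 = finrank F V)
    (hdim : ∀ π ∈ O, finrank F π = n) :
    (∑ π ∈ O, ((Fintype.card F : ℤ) ^ finrank F ↥(π ⊓ H) - 1)) * Fintype.card F =
      #{π ∈ O | π ≤ H} * (Fintype.card F * (Fintype.card F : ℤ) ^ n - Fintype.card F) +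
        #{π ∈ O | ¬π ≤ H} * ((Fintype.card F : ℤ) ^ n - Fintype.card F) := by
  have hterm : ∀ π ∈ O, ((Fintype.card F : ℤ) ^ finrank F ↥(π ⊓ H) - 1) * Fintype.card F =
      if π ≤ H then Fintype.card F * (Fintype.card F : ℤ) ^ n - Fintype.card F
      else (Fintype.card F : ℤ) ^ n - Fintype.card F := by
    intro π hπ
    split_ifs with hπH
    · rw [inf_eq_left.2 hπH, hdim π hπ]
      ring
    · rw [sub_mul, ← pow_succ, finrank_inf_add_one_of_not_le hH hπH, hdim π hπ, one_mul]
  rw [sum_mul, sum_congr rfl hterm, sum_ite, sum_const, sum_const, nsmul_eq_mul, nsmul_eq_mul]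

/-- The axioms of a pseudo-ovoid other than the three-span condition, in any `4n`-dimensional
space. -/
structure IsWeakPseudoOvoid (n : ℕ) (O : Finset (Submodule F V))
    (τ : Submodule F V → Submodule F V) : Prop where
  finrank_eq : finrank F V = 4 * n
  card_eq : #O = Fintype.card F ^ (2 * n) + 1
  finrank_of_mem : ∀ π ∈ O, finrank F π = n
  finrank_tangent : ∀ π ∈ O, finrank F (τ π) = 3 * n
  le_tangent : ∀ π ∈ O, π ≤ τ π
  tangent_inf_eq_bot : ∀ π ∈ O, ∀ π' ∈ O, π' ≠ π → τ π ⊓ π' = ⊥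

namespace IsWeakPseudoOvoid

variable {n : ℕ} {O : Finset (Submodule F V)} {τ : Submodule F V → Submodule F V}
  {π π' : Submodule F V}

theorem pairwiseDisjoint (hO : IsWeakPseudoOvoid n O τ) :
    (O : Set (Submodule F V)).PairwiseDisjoint id := fun π hπ π' hπ' hne =>
  ((disjoint_iff.2 (hO.tangent_inf_eq_bot π' hπ' π hπ hne)).mono_left (hO.le_tangent π' hπ')).symm

theorem inf_eq_bot_of_le_tangent (hO : IsWeakPseudoOvoid n O τ) (hπ : π ∈ O) (hπ' : π' ∈ O)
    (hne : π' ≠ π) {W : Submodule F V} (hW : W ≤ τ π) : π' ⊓ W = ⊥ :=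
  eq_bot_iff.2 fun _ hv => (hO.tangent_inf_eq_bot π hπ π' hπ' hne).le ⟨hW hv.2, hv.1⟩

end IsWeakPseudoOvoid

variable [Fintype V]

theorem card_filter_mem_ne_zero (W : Submodule F V) :
    (#{v | v ∈ W ∧ v ≠ 0} : ℤ) = Fintype.card F ^ finrank F W - 1 := by
  have hW : #{v | v ∈ W} = Fintype.card F ^ finrank F W := by
    rw [← card_eq_pow_finrank, Fintype.card_subtype]
  have h0 : (0 : V) ∈ ({v | v ∈ W} : Finset V) := by simp [W.zero_mem]
  rw [← Nat.cast_pow, ← hW, ← card_erase_add_one h0, Nat.cast_add_one, add_sub_cancel_right]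
  congr 2
  ext v
  simp [and_comm]

theorem card_pointsOff_inf {O : Finset (Submodule F V)}
    (hO : (O : Set (Submodule F V)).PairwiseDisjoint id) (W : Submodule F V) :
    (#{v ∈ pointsOff O | v ∈ W} : ℤ) + ∑ π ∈ O, ((Fintype.card F : ℤ) ^ finrank F ↥(π ⊓ W) - 1) =
      Fintype.card F ^ finrank F W - 1 := by
  have hdisj : (O : Set (Submodule F V)).PairwiseDisjoint
      fun π => ({v | v ∈ π ⊓ W ∧ v ≠ 0} : Finset V) := by
    intro π hπ π' hπ' hne
    rw [Function.onFun, disjoint_left]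
    intro v hv hv'
    simp only [mem_filter, mem_univ, true_and, Submodule.mem_inf] at hv hv'
    exact hv.2 ((Submodule.disjoint_def.1 (hO hπ hπ' hne)) v hv.1.1 hv'.1.1)
  have hcovered : ∑ π ∈ O, ((Fintype.card F : ℤ) ^ finrank F ↥(π ⊓ W) - 1) =
      #{v | v ∈ W ∧ v ≠ 0 ∧ ∃ π ∈ O, v ∈ π} := by
    simp_rw [← card_filter_mem_ne_zero, ← Nat.cast_sum, ← card_biUnion hdisj]
    congr 2
    ext v
    simp only [mem_filter, mem_univ, true_and, mem_biUnion, Submodule.mem_inf]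
    tauto
  rw [hcovered, ← card_filter_mem_ne_zero, ← Nat.cast_add, add_comm,
    ← card_filter_add_card_filter_not (s := {v | v ∈ W ∧ v ≠ 0}) (fun v => ∃ π ∈ O, v ∈ π)]
  simp only [filter_filter, pointsOff]
  congr 3 <;> ext v <;> simp only [mem_filter, mem_univ, true_and, not_exists, not_and] <;> tauto

namespace IsWeakPseudoOvoid

variable {n : ℕ} {O : Finset (Submodule F V)} {τ : Submodule F V → Submodule F V}
  {π π' : Submodule F V}

theorem card_pointsOff_inf_of_le_tangent (hO : IsWeakPseudoOvoid n O τ) (hπ : π ∈ O)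
    {W : Submodule F V} (hW : W ≤ τ π) :
    (#{v ∈ pointsOff O | v ∈ W} : ℤ) + ((Fintype.card F : ℤ) ^ finrank F ↥(π ⊓ W) - 1) =
      Fintype.card F ^ finrank F W - 1 := by
  rw [← card_pointsOff_inf hO.pairwiseDisjoint W, sum_eq_single_of_mem π hπ]
  intro π' hπ' hne
  rw [hO.inf_eq_bot_of_le_tangent hπ hπ' hne hW, finrank_bot, pow_zero, sub_self]

theorem finrank_tangent_inf_tangent (hO : IsWeakPseudoOvoid n O τ) (hπ : π ∈ O) (hπ' : π' ∈ O)
    (hne : π ≠ π') : finrank F ↥(τ π ⊓ τ π') = 2 * n := by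
  have hsup := Submodule.finrank_sup_add_finrank_inf_eq (τ π) (τ π')
  have hsupV : finrank F ↥(τ π ⊔ τ π') ≤ 4 * n := hO.finrank_eq ▸ Submodule.finrank_le _
  have hdisj := Submodule.finrank_sup_add_finrank_inf_eq (τ π ⊓ τ π') π'
  rw [inf_comm _ π', hO.inf_eq_bot_of_le_tangent hπ hπ' hne.symm inf_le_left, finrank_bot] at hdisj
  have hle : finrank F ↥(τ π ⊓ τ π' ⊔ π') ≤ 3 * n :=
    hO.finrank_tangent π' hπ' ▸ Submodule.finrank_mono (sup_le inf_le_right (hO.le_tangent π' hπ'))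
  rw [hO.finrank_tangent π hπ, hO.finrank_tangent π' hπ'] at hsup
  have := hO.finrank_of_mem π' hπ'
  omega

theorem card_pointsOff (hO : IsWeakPseudoOvoid n O τ) :
    (#(pointsOff O) : ℤ) =
      (Fintype.card F : ℤ) ^ (4 * n) - 1 - #O * ((Fintype.card F : ℤ) ^ n - 1) := by
  have h := card_pointsOff_inf hO.pairwiseDisjoint ⊤
  rw [filter_true_of_mem fun v _ => Submodule.mem_top, finrank_top, hO.finrank_eq] at h
  rw [← h, sum_congr rfl fun π hπ => by rw [inf_top_eq, hO.finrank_of_mem π hπ], sum_const,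
    nsmul_eq_mul]
  ring

theorem card_pointsOff_inf_tangent (hO : IsWeakPseudoOvoid n O τ) (hπ : π ∈ O) :
    (#{v ∈ pointsOff O | v ∈ τ π} : ℤ) = (Fintype.card F : ℤ) ^ (3 * n) - Fintype.card F ^ n := by
  have h := hO.card_pointsOff_inf_of_le_tangent hπ le_rfl
  rw [inf_eq_left.2 (hO.le_tangent π hπ), hO.finrank_of_mem π hπ, hO.finrank_tangent π hπ] at h
  linear_combination h

theorem card_pointsOff_inf_tangent_inf_tangent (hO : IsWeakPseudoOvoid n O τ) (hπ : π ∈ O)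
    (hπ' : π' ∈ O) (hne : π ≠ π') :
    (#{v ∈ pointsOff O | v ∈ τ π ⊓ τ π'} : ℤ) = (Fintype.card F : ℤ) ^ (2 * n) - 1 := by
  have h := hO.card_pointsOff_inf_of_le_tangent hπ (inf_le_left : τ π ⊓ τ π' ≤ τ π)
  rwa [hO.inf_eq_bot_of_le_tangent hπ' hπ hne inf_le_right, finrank_bot, pow_zero, sub_self,
    add_zero, hO.finrank_tangent_inf_tangent hπ hπ' hne] at h

theorem sum_card_tangents (hO : IsWeakPseudoOvoid n O τ) :
    ∑ v ∈ pointsOff O, (#{π ∈ O | v ∈ τ π} : ℤ) =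
      #O * ((Fintype.card F : ℤ) ^ (3 * n) - Fintype.card F ^ n) := by
  rw [← Nat.cast_sum, sum_card_filter_comm _ _ (fun v π => v ∈ τ π),
    Nat.cast_sum, sum_congr rfl fun π hπ => hO.card_pointsOff_inf_tangent hπ, sum_const,
    nsmul_eq_mul]

theorem sum_sq_card_tangents (hO : IsWeakPseudoOvoid n O τ) :
    ∑ v ∈ pointsOff O, (#{π ∈ O | v ∈ τ π} : ℤ) ^ 2 =
      #O * ((Fintype.card F : ℤ) ^ (3 * n) - Fintype.card F ^ n) +
        #O * (#O - 1) * ((Fintype.card F : ℤ) ^ (2 * n) - 1) := by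
  have hsq : ∀ v, #{π ∈ O | v ∈ τ π} ^ 2 = #{p ∈ O ×ˢ O | v ∈ τ p.1 ⊓ τ p.2} := fun v => by
    rw [sq, ← card_product, ← filter_product]
    simp only [Submodule.mem_inf]
  have hrow : ∀ π ∈ O, ∑ π' ∈ O, (#{v ∈ pointsOff O | v ∈ τ π ⊓ τ π'} : ℤ) =
      (Fintype.card F : ℤ) ^ (3 * n) - Fintype.card F ^ n +
        (#O - 1) * ((Fintype.card F : ℤ) ^ (2 * n) - 1) := fun π hπ => by
    rw [← add_sum_erase _ _ hπ, inf_idem, hO.card_pointsOff_inf_tangent hπ,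
      sum_congr rfl fun π' hπ' => hO.card_pointsOff_inf_tangent_inf_tangent hπ
        (mem_of_mem_erase hπ') (ne_of_mem_erase hπ').symm,
      sum_const, nsmul_eq_mul, card_erase_of_mem hπ, Nat.cast_sub (card_pos.2 ⟨π, hπ⟩),
      Nat.cast_one]
  rw [sum_congr rfl fun v _ => by rw [← Nat.cast_pow, hsq], ← Nat.cast_sum,
    sum_card_filter_comm (pointsOff O) (O ×ˢ O) (fun v p => v ∈ τ p.1 ⊓ τ p.2),
    Nat.cast_sum, sum_product, sum_congr rfl hrow, sum_const, nsmul_eq_mul]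
  ring

theorem card_filter_mem_tangent (hO : IsWeakPseudoOvoid n O τ) {v : V} (hv : v ∈ pointsOff O) :
    #{π ∈ O | v ∈ τ π} = Fintype.card F ^ n + 1 := by
  have hcard : (#O : ℤ) = (Fintype.card F : ℤ) ^ (2 * n) + 1 := by exact_mod_cast hO.card_eq
  have key := eq_of_sum_eq_of_sum_sq_eq (f := fun v => (#{π ∈ O | v ∈ τ π} : ℤ))
    (a := (Fintype.card F : ℤ) ^ n + 1) ?_ ?_ v hv
  · exact_mod_cast key
  · rw [hO.sum_card_tangents, hO.card_pointsOff, hcard]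
    ring
  · rw [hO.sum_sq_card_tangents, hO.card_pointsOff, hcard]
    ring

theorem sum_card_pointsOff_inf_tangent_inf (hO : IsWeakPseudoOvoid n O τ) (W : Submodule F V) :
    ∑ π ∈ O, (#{v ∈ pointsOff O | v ∈ τ π ⊓ W} : ℤ) =
      #{v ∈ pointsOff O | v ∈ W} * ((Fintype.card F : ℤ) ^ n + 1) := by
  have hfilter : ∀ π, {v ∈ pointsOff O | v ∈ τ π ⊓ W} = {v ∈ {v ∈ pointsOff O | v ∈ W} | v ∈ τ π} :=
    fun π => by
      rw [filter_filter]
      simp only [Submodule.mem_inf, and_comm]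
  simp_rw [hfilter]
  rw [← Nat.cast_sum, ← sum_card_filter_comm _ O (fun v π => v ∈ τ π),
    sum_congr rfl fun v hv => hO.card_filter_mem_tangent (mem_filter.1 hv).1, sum_const,
    smul_eq_mul]
  push_cast
  rfl

theorem card_pointsOff_inf_tangent_inf_hyperplane (hO : IsWeakPseudoOvoid n O τ) (hπ : π ∈ O)
    {H : Submodule F V} (hH : finrank F H + 1 = finrank F V) (hπH : ¬τ π ≤ H) :
    ((#{v ∈ pointsOff O | v ∈ τ π ⊓ H} : ℤ) + ((Fintype.card F : ℤ) ^ finrank F ↥(π ⊓ H) - 1)) *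
      Fintype.card F = (Fintype.card F : ℤ) ^ (3 * n) - Fintype.card F := by
  have h := hO.card_pointsOff_inf_of_le_tangent hπ (inf_le_left : τ π ⊓ H ≤ τ π)
  rw [← inf_assoc, inf_eq_left.2 (hO.le_tangent π hπ)] at h
  rw [h, sub_mul, ← pow_succ, finrank_inf_add_one_of_not_le hH hπH, hO.finrank_tangent π hπ,
    one_mul]

theorem card_filter_le_hyperplane (hO : IsWeakPseudoOvoid n O τ) {H : Submodule F V}
    (hH : finrank F H + 1 = finrank F V) (hHτ : ∀ π ∈ O, ¬τ π ≤ H) :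
    #{π ∈ O | π ≤ H} = Fintype.card F ^ n + 1 := by
  have hcard : (#O : ℤ) = ((Fintype.card F : ℤ) ^ n) ^ 2 + 1 := by
    rw [← pow_mul, mul_comm n]; exact_mod_cast hO.card_eq
  have hq2 : (2 : ℤ) ≤ Fintype.card F := by exact_mod_cast Fintype.one_lt_card
  have hsplit : (#{π ∈ O | π ≤ H} : ℤ) + #{π ∈ O | ¬π ≤ H} = #O := by
    exact_mod_cast card_filter_add_card_filter_not _
  have hS := congrArg (· * (Fintype.card F : ℤ)) (card_pointsOff_inf hO.pairwiseDisjoint H)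
  have hτ := sum_congr rfl fun π hπ =>
    hO.card_pointsOff_inf_tangent_inf_hyperplane hπ hH (hHτ π hπ)
  have hdim := sum_pow_finrank_inf_hyperplane_mul hH hO.finrank_of_mem
  rw [sub_mul, ← pow_succ, hH, hO.finrank_eq] at hS
  rw [← sum_mul, sum_add_distrib, hO.sum_card_pointsOff_inf_tangent_inf, sum_const, nsmul_eq_mul,
    hcard] at hτ
  set q : ℤ := (Fintype.card F : ℤ) with hq
  set X : ℤ := q ^ n with hX
  have key : (#{π ∈ O | π ≤ H} : ℤ) * (X ^ 2 * (q - 1)) = (X + 1) * (X ^ 2 * (q - 1)) := by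
    linear_combination (X + 1) * hS - hτ - X * hdim - X * (X - q) * hsplit - X * (X - q) * hcard
  have hX0 : X ^ 2 * (q - 1) ≠ 0 :=
    mul_ne_zero (pow_ne_zero _ (pow_ne_zero _ (by omega))) (by omega)
  have := mul_right_cancel₀ hX0 key
  rw [hX, hq] at this
  exact_mod_cast this

end IsWeakPseudoOvoid

end

theorem IsPseudoOvoid.isWeakPseudoOvoid {n : ℕ} {F : Type} [Field F] [Fintype F]
    {O : Finset (Submodule F (Fin (4 * n) → F))}
    {τ : Submodule F (Fin (4 * n) → F) → Submodule F (Fin (4 * n) → F)}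
    (hO : IsPseudoOvoid n (Fintype.card F) F O τ) : IsWeakPseudoOvoid n O τ where
  finrank_eq := finrank_fin_fun F
  card_eq := hO.1
  finrank_of_mem := hO.2.1
  finrank_tangent π hπ := (hO.2.2.2 π hπ).1
  le_tangent π hπ := (hO.2.2.2 π hπ).2.1
  tangent_inf_eq_bot π hπ := (hO.2.2.2 π hπ).2.2

theorem pseudo_ovoid_hyperplane_and_point_counts_general (n q : ℕ)
    (F : Type) [Field F] [Fintype F] (hq : Fintype.card F = q)
    (O : Finset (Submodule F (Fin (4 * n) → F)))
    (τ : Submodule F (Fin (4 * n) → F) → Submodule F (Fin (4 * n) → F))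
    (hO : IsPseudoOvoid n q F O τ) :
    (∀ H : Submodule F (Fin (4 * n) → F), Module.finrank F H = 4 * n - 1 →
      (∀ π ∈ O, ¬ τ π ≤ H) →
      {π ∈ (O : Set (Submodule F (Fin (4 * n) → F))) | π ≤ H}.ncard = q ^ n + 1) ∧
    (∀ L : Submodule F (Fin (4 * n) → F), Module.finrank F L = 1 →
      (∀ π ∈ O, ¬ L ≤ π) →
      {π ∈ (O : Set (Submodule F (Fin (4 * n) → F))) | L ≤ τ π}.ncard = q ^ n + 1) := by
  subst hq
  have hO' := hO.isWeakPseudoOvoid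
  obtain ⟨π₀, hπ₀⟩ : O.Nonempty := card_pos.1 (by rw [hO.1]; omega)
  refine ⟨fun H hH hHτ => ?_, fun L hL hLO => ?_⟩
  · have hHV : finrank F H + 1 = finrank F (Fin (4 * n) → F) := by
      have hHtop : H ≠ ⊤ := fun h => hHτ π₀ hπ₀ (h ▸ le_top)
      have := Submodule.finrank_lt hHtop
      rw [finrank_fin_fun] at this ⊢
      omega
    have := hO'.card_filter_le_hyperplane hHV hHτ
    rwa [← Set.ncard_coe_finset, coe_filter] at this
  · obtain ⟨v, hvL, hv0⟩ :=
      L.exists_mem_ne_zero_of_ne_bot (Submodule.isAtom_iff_finrank_eq_one.2 hL).ne_bot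
    have hle : ∀ W : Submodule F (Fin (4 * n) → F), L ≤ W ↔ v ∈ W := by
      rw [eq_span_singleton_of_mem_of_finrank_eq_one hL hvL hv0]
      exact fun W => Submodule.span_singleton_le_iff_mem v W
    have hv : v ∈ pointsOff O :=
      mem_pointsOff.2 ⟨hv0, fun π hπ hvπ => hLO π hπ ((hle π).2 hvπ)⟩
    simp_rw [hle]
    have := hO'.card_filter_mem_tangent (τ := τ) hv
    rwa [← Set.ncard_coe_finset, coe_filter] at this

/-- Payne–Thas: let `O` be a pseudo-ovoid of `PG(4n−1,q)`.  Then (i) every hyperplane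
(subspace of `F_q^{4n}` of dimension `4n−1`) containing no tangent space of `O`
contains exactly `qⁿ + 1` elements of `O`; and (ii) every 1-dimensional subspace of
`F_q^{4n}` not contained in any element of `O` lies in exactly `qⁿ + 1` tangent
spaces of `O`. -/
theorem pseudo_ovoid_hyperplane_and_point_counts (n q : ℕ) (hn : 1 ≤ n)
    (F : Type) [Field F] [Fintype F] (hq : Fintype.card F = q)
    (O : Finset (Submodule F (Fin (4 * n) → F)))
    (τ : Submodule F (Fin (4 * n) → F) → Submodule F (Fin (4 * n) → F))
    (hO : IsPseudoOvoid n q F O τ) :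
    (∀ H : Submodule F (Fin (4 * n) → F), Module.finrank F H = 4 * n - 1 →
      (∀ π ∈ O, ¬ τ π ≤ H) →
      {π ∈ (O : Set (Submodule F (Fin (4 * n) → F))) | π ≤ H}.ncard = q ^ n + 1) ∧
    (∀ L : Submodule F (Fin (4 * n) → F), Module.finrank F L = 1 →
      (∀ π ∈ O, ¬ L ≤ π) →
      {π ∈ (O : Set (Submodule F (Fin (4 * n) → F))) | L ≤ τ π}.ncard = q ^ n + 1) :=
  pseudo_ovoid_hyperplane_and_point_counts_general n q F hq O τ hO
end
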